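/- arXiv:1405.7504 — 8 statements merged into one kernel-verified Lean document; each statement's English description precedes it below -/
import Mathlib

section
/- In any MV-algebra, the identity x ⊕ ¬x = ¬0 holds for every element x (axiom MV7 is derivable from MV1–MV6). -/
universe u v

/-- An MV-algebra: operations ⊕, ¬, 0 satisfying MV1–MV6. -/
structure MVAlgebra (A : Type u) where
  oplus : A → A → A
  neg : A → A
  zero : A
  mv1 : ∀ x y z, oplus (oplus x y) z = oplus x (oplus y z)
  mv2 : ∀ x y, oplus x y = oplus y x
  mv3 : ∀ x, oplus x zero = x
  mv4 : ∀ x, neg (neg x) = x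
  mv5 : ∀ x, oplus x (neg zero) = neg zero
  mv6 : ∀ x y, oplus (neg (oplus (neg x) y)) y = oplus (neg (oplus x (neg y))) x

/-- MV7: in any MV-algebra, x ⊕ ¬x = ¬0 (derivable from MV1–MV6). -/
theorem mv7_derivable {A : Type u} (M : MVAlgebra A) :
    ∀ x : A, M.oplus x (M.neg x) = M.neg M.zero := by
  intro x
  have h := M.mv6 x (M.neg M.zero)
  rw [M.mv5] at h
  rw [M.mv4, M.mv3] at h
  rw [M.mv2, ← h]
end

section
/- Let G be a lattice-ordered abelian group and u ∈ G with 0 < u. On the interval [0,u] = {a ∈ G : 0 ≤ a ∧ a ≤ u}, the operations a ⊕ b = u ⊓ (a + b) and ¬a = u − a are well defined (map the interval into itself), and together with the constant 0 they satisfy all six MV-algebra axioms MV1–MV6; that is, Γ(G,u) is an MV-algebra. -/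
universe u v

section aux

variable {G : Type u} [Lattice G] [AddCommGroup G]
    [CovariantClass G G (· + ·) (· ≤ ·)] (u : G)

lemma gamma_aux1 {x y z : G} (hz : 0 ≤ z) :
    u ⊓ (u ⊓ (x + y) + z) = u ⊓ (x + y + z) := by
  rw [add_comm (u ⊓ (x + y)) z, add_inf, ← inf_assoc,
    inf_eq_left.2 (le_add_of_nonneg_left hz), add_comm z (x + y)]

lemma gamma_aux6 {x y : G} (hxu : x ≤ u) (hy : 0 ≤ y) (hyu : y ≤ u) :
    u ⊓ (u - u ⊓ (u - x + y) + y) = x ⊔ y := by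
  rw [sub_inf, sub_self, sub_add_eq_sub_sub, sub_sub_cancel, sup_add,
    zero_add, sub_add_cancel]
  exact inf_eq_right.2 (sup_le hyu hxu) |>.trans (sup_comm y x)

end aux

/-- Γ(G,u) is an MV-algebra: on the interval [0,u] of a lattice-ordered abelian
group the operations a ⊕ b = u ⊓ (a + b), ¬a = u - a and the constant 0 are
well defined and satisfy MV1–MV6. -/
theorem gamma_is_MVAlgebra {G : Type u} [Lattice G] [AddCommGroup G]
    [CovariantClass G G (· + ·) (· ≤ ·)] (u : G) (hu : 0 < u) :
    ∃ M : MVAlgebra {a : G // 0 ≤ a ∧ a ≤ u},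
      (∀ x y : {a : G // 0 ≤ a ∧ a ≤ u}, (M.oplus x y : G) = u ⊓ ((x : G) + (y : G))) ∧
      (∀ x : {a : G // 0 ≤ a ∧ a ≤ u}, (M.neg x : G) = u - (x : G)) ∧
      ((M.zero : G) = 0) := by
  refine ⟨{
    oplus := fun x y => ⟨u ⊓ ((x : G) + y),
      le_inf hu.le (add_nonneg x.2.1 y.2.1), inf_le_left⟩
    neg := fun x => ⟨u - x, sub_nonneg.2 x.2.2, sub_le_self u x.2.1⟩
    zero := ⟨0, le_refl 0, hu.le⟩
    mv1 := fun x y z => Subtype.ext <| by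
      simp only
      rw [gamma_aux1 u z.2.1, add_comm (x : G) (u ⊓ ((y : G) + z)),
        gamma_aux1 u x.2.1, add_assoc, add_comm ((y : G) + z) (x : G)]
    mv2 := fun x y => Subtype.ext <| by simp only [add_comm]
    mv3 := fun x => Subtype.ext <| by
      simp only [add_zero]; exact inf_eq_right.2 x.2.2
    mv4 := fun x => Subtype.ext <| by simp only [sub_sub_cancel]
    mv5 := fun x => Subtype.ext <| by
      simp only [sub_zero]
      exact inf_eq_left.2 (le_add_of_nonneg_left x.2.1)
    mv6 := fun x y => Subtype.ext <| by
      simp only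
      rw [gamma_aux6 u x.2.2 y.2.1 y.2.2, add_comm (x : G) (u - (y : G)),
        gamma_aux6 u y.2.2 x.2.1 x.2.2, sup_comm]
  }, fun x y => rfl, fun x => rfl, rfl⟩
end

section
/- Let G be a lattice-ordered abelian group and u ∈ G with 0 < u. For all a, b ∈ G with 0 ≤ a ≤ u and 0 ≤ b ≤ u, one has u ⊓ ((u − (u ⊓ ((u − a) + b))) + b) = a ⊔ b. (In the MV-algebra Γ(G,u) this says ¬(¬a ⊕ b) ⊕ b = a ⊔ b, which in particular yields axiom MV6 since the right-hand side is symmetric in a and b.) -/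
/-- In a lattice-ordered abelian group, for 0 ≤ a ≤ u and 0 ≤ b ≤ u one has
u ⊓ ((u - (u ⊓ ((u - a) + b))) + b) = a ⊔ b; i.e. in Γ(G,u), ¬(¬a ⊕ b) ⊕ b = a ⊔ b. -/
theorem gamma_mv6_sup {G : Type*} [Lattice G] [AddCommGroup G]
    [CovariantClass G G (· + ·) (· ≤ ·)] (u : G) (hu : 0 < u) (a b : G)
    (ha0 : 0 ≤ a) (hau : a ≤ u) (hb0 : 0 ≤ b) (hbu : b ≤ u) :
    u ⊓ ((u - (u ⊓ ((u - a) + b))) + b) = a ⊔ b := by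
  have h1 : u - (u ⊓ ((u - a) + b)) = 0 ⊔ (a - b) := by
    rw [sub_inf]; abel_nf
  rw [h1, sup_add, zero_add, sub_add_cancel, inf_eq_right.mpr (sup_le hbu hau), sup_comm]
end

section
/- For positive natural numbers n and m, there exists an embedding of MV-algebras from Łₙ into Łₘ if and only if n divides m. -/
/-- The carrier of the Łukasiewicz chain Łₙ : {k/n : k ∈ ℕ, 0 ≤ k ≤ n} ⊆ ℚ. -/
abbrev Luk (n : ℕ+) : Type := {x : ℚ // ∃ k : ℕ, k ≤ (n : ℕ) ∧ x = (k : ℚ) / (n : ℕ)}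

/-- The constant 0 of Łₙ. -/
def lukZero (n : ℕ+) : Luk n := ⟨0, 0, Nat.zero_le _, by simp⟩

/-- The negation ¬x = 1 - x of Łₙ. -/
def lukNeg {n : ℕ+} (x : Luk n) : Luk n :=
  ⟨1 - x.1, by
    obtain ⟨k, hk, hx⟩ := x.2
    refine ⟨(n : ℕ) - k, Nat.sub_le _ _, ?_⟩
    have hn : ((n : ℕ) : ℚ) ≠ 0 := by exact_mod_cast n.pos.ne'
    rw [hx, Nat.cast_sub hk, sub_div, div_self hn]⟩

/-- The truncated sum x ⊕ y = min 1 (x + y) of Łₙ. -/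
def lukOplus {n : ℕ+} (x y : Luk n) : Luk n :=
  ⟨min 1 (x.1 + y.1), by
    obtain ⟨k, hk, hx⟩ := x.2
    obtain ⟨j, hj, hy⟩ := y.2
    refine ⟨min (n : ℕ) (k + j), min_le_left _ _, ?_⟩
    have hn : (0 : ℚ) < ((n : ℕ) : ℚ) := by exact_mod_cast n.pos
    rw [hx, hy, ← add_div]
    rcases le_total (k + j) (n : ℕ) with h | h
    · rw [min_eq_right h, min_eq_right]
      · push_cast; ring_nf
      · rw [div_le_one hn]; exact_mod_cast h
    · rw [min_eq_left h, min_eq_left, div_self hn.ne']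
      · rw [one_le_div hn]; exact_mod_cast h⟩

/-!
If `n ∣ m`, then `{k/n} ⊆ {k/m}` as subsets of `ℚ`, and the inclusion is an embedding.
Conversely, let `f` be any homomorphism `Łₙ → Łₘ` and `a = f(1/n)`. Since `k/n` is the `k`-fold
`⊕`-sum of `1/n`, we get `f(k/n) = min 1 (k a)`; applying `f` to `¬(1/n) = (n-1)/n` gives
`min 1 ((n-1) a) = 1 - a`, which forces `n a = 1`. So `1/n = a ∈ Łₘ`, i.e. `n ∣ m`.
-/

theorem min_min_add_of_nonneg {α : Type*} [AddCommMonoid α] [LinearOrder α] [IsOrderedAddMonoid α]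
    (c x : α) {a : α} (ha : 0 ≤ a) : min c (min c x + a) = min c (x + a) := by
  rw [← min_add_add_right, ← min_assoc, min_eq_left (le_add_of_nonneg_right ha)]

theorem mul_eq_one_of_min_one_mul_eq_one_sub {α : Type*} [Field α] [LinearOrder α]
    [IsStrictOrderedRing α] {x a : α} (h : min 1 ((x - 1) * a) = 1 - a) : x * a = 1 := by
  rcases le_total 1 ((x - 1) * a) with hle | hle
  · have ha : a = 0 := by rw [min_eq_left hle] at h; linarith
    rw [ha, mul_zero] at hle
    exact absurd hle zero_lt_one.not_ge
  · rw [min_eq_right hle] at h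
    linear_combination h

namespace Luk

variable {n m : ℕ+}

theorem val_nonneg (x : Luk n) : 0 ≤ x.1 := by
  obtain ⟨k, -, hx⟩ := x.2
  rw [hx]
  positivity

def ofNat (n : ℕ+) (k : ℕ) (hk : k ≤ (n : ℕ)) : Luk n := ⟨k / (n : ℕ), k, hk, rfl⟩

theorem ofNat_zero : ofNat n 0 (Nat.zero_le _) = lukZero n :=
  Subtype.ext (by simp [ofNat, lukZero])

theorem ofNat_succ {k : ℕ} (hk : k + 1 ≤ (n : ℕ)) :
    ofNat n (k + 1) hk = lukOplus (ofNat n k (Nat.le_of_succ_le hk)) (ofNat n 1 n.pos) := by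
  have hn : (0 : ℚ) < (n : ℕ) := by exact_mod_cast n.pos
  apply Subtype.ext
  change ((k + 1 : ℕ) : ℚ) / (n : ℕ) = min 1 ((k : ℚ) / (n : ℕ) + (1 : ℕ) / (n : ℕ))
  rw [← add_div, min_eq_right ((div_le_one hn).2 (by exact_mod_cast hk))]
  push_cast
  rfl

theorem lukNeg_ofNat_one : lukNeg (ofNat n 1 n.pos) = ofNat n (n - 1) (Nat.sub_le _ _) := by
  have hn : ((n : ℕ) : ℚ) ≠ 0 := by exact_mod_cast n.ne_zero
  apply Subtype.ext
  change 1 - ((1 : ℕ) : ℚ) / (n : ℕ) = (((n : ℕ) - 1 : ℕ) : ℚ) / (n : ℕ)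
  rw [Nat.cast_sub n.pos, sub_div, div_self hn]

theorem val_map_ofNat {f : Luk n → Luk m} (hplus : ∀ x y, f (lukOplus x y) = lukOplus (f x) (f y))
    (hzero : f (lukZero n) = lukZero m) (k : ℕ) (hk : k ≤ (n : ℕ)) :
    (f (ofNat n k hk)).1 = min 1 (k * (f (ofNat n 1 n.pos)).1) := by
  induction k with
  | zero =>
    rw [ofNat_zero, hzero]
    simp [lukZero]
  | succ k ih =>
    rw [ofNat_succ, hplus]
    change min 1 ((f _).1 + (f _).1) = _
    rw [ih, min_min_add_of_nonneg _ _ (val_nonneg _)]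
    push_cast
    ring_nf

theorem val_map_ofNat_one {f : Luk n → Luk m}
    (hplus : ∀ x y, f (lukOplus x y) = lukOplus (f x) (f y))
    (hneg : ∀ x, f (lukNeg x) = lukNeg (f x)) (hzero : f (lukZero n) = lukZero m) :
    ((n : ℕ) : ℚ) * (f (ofNat n 1 n.pos)).1 = 1 := by
  have h := congrArg Subtype.val (hneg (ofNat n 1 n.pos))
  rw [lukNeg_ofNat_one, val_map_ofNat hplus hzero, Nat.cast_sub n.pos, Nat.cast_one] at h
  exact mul_eq_one_of_min_one_mul_eq_one_sub h

theorem dvd_of_hom {f : Luk n → Luk m}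
    (hplus : ∀ x y, f (lukOplus x y) = lukOplus (f x) (f y))
    (hneg : ∀ x, f (lukNeg x) = lukNeg (f x)) (hzero : f (lukZero n) = lukZero m) :
    (n : ℕ) ∣ (m : ℕ) := by
  have hm : ((m : ℕ) : ℚ) ≠ 0 := by exact_mod_cast m.ne_zero
  have h := val_map_ofNat_one hplus hneg hzero
  obtain ⟨j, -, hj⟩ := (f (ofNat n 1 n.pos)).2
  rw [hj, mul_div_assoc', div_eq_one_iff_eq hm] at h
  exact ⟨j, by exact_mod_cast h.symm⟩

def inclusion (h : (n : ℕ) ∣ (m : ℕ)) (x : Luk n) : Luk m :=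
  ⟨x.1, by
    obtain ⟨c, hc⟩ := h
    obtain ⟨k, hk, hx⟩ := x.2
    have hc0 : (c : ℚ) ≠ 0 := by exact_mod_cast right_ne_zero_of_mul (hc ▸ m.ne_zero)
    refine ⟨k * c, hc ▸ Nat.mul_le_mul_right c hk, ?_⟩
    rw [hx, hc]
    push_cast
    exact (mul_div_mul_right _ _ hc0).symm⟩

theorem inclusion_injective (h : (n : ℕ) ∣ (m : ℕ)) : Function.Injective (inclusion h) :=
  fun x y hxy => Subtype.ext (congrArg Subtype.val hxy : (inclusion h x).1 = (inclusion h y).1)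

end Luk

/-- Łₙ embeds into Łₘ if and only if n divides m. -/
theorem luk_embeds_iff_dvd (n m : ℕ+) :
    (∃ f : Luk n → Luk m, Function.Injective f ∧
        (∀ x y, f (lukOplus x y) = lukOplus (f x) (f y)) ∧
        (∀ x, f (lukNeg x) = lukNeg (f x)) ∧
        f (lukZero n) = lukZero m) ↔ (n : ℕ) ∣ (m : ℕ) := by
  constructor
  · rintro ⟨f, -, hplus, hneg, hzero⟩
    exact Luk.dvd_of_hom hplus hneg hzero
  · intro h
    exact ⟨Luk.inclusion h, Luk.inclusion_injective h, fun _ _ => rfl, fun _ => rfl, rfl⟩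
end

section
/- Every simple MV-algebra is isomorphic to a subalgebra of [0,1]; that is, if A is an MV-algebra that is simple, then there exists an injective map f from A into the real unit interval [0,1] such that f 0 = 0, f (¬x) = 1 − f x, and f (x ⊕ y) = min 1 (f x + f y) for all x, y ∈ A. -/
universe u v

/-- A congruence of an MV-algebra: an equivalence relation compatible with ⊕ and ¬. -/
def IsMVCongruence {A : Type u} (M : MVAlgebra A) (θ : A → A → Prop) : Prop :=
  Equivalence θ ∧ (∀ a b c d, θ a b → θ c d → θ (M.oplus a c) (M.oplus b d)) ∧
    ∀ a b, θ a b → θ (M.neg a) (M.neg b)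

/-- A simple MV-algebra: it has exactly two congruences, equality and the all relation. -/
def IsSimpleMV {A : Type u} (M : MVAlgebra A) : Prop :=
  (fun a b : A => a = b) ≠ (fun _ _ => True) ∧
    ∀ θ, IsMVCongruence M θ → θ = (fun a b : A => a = b) ∨ θ = fun _ _ => True

/-!
A simple MV-algebra is archimedean: the congruence generated by `c ≠ 0` has to identify `0` and
`⊤`, so `n • c = ⊤` for some `n`. It is then a chain, because the truncated differences satisfy
`(b - a) - (a - b) = b - a`, so `b - a` vanishes as soon as a multiple of `a - b` is `⊤`. In a
chain, the pairs `⟨n, x⟩` with `x ≠ ⊤`, read as `n + x` and added with carry, form a commutative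
monoid on which the integer part is additive up to an error `0` or `1`. Its homogenization
`p ↦ lim (n • p).int / n` (Fekete) is therefore additive, and sends the MV-algebra into `[0,1]`
respecting `⊕` and `¬`. The kernel of such a map is a congruence, hence equality by simplicity.
-/

open Filter Topology

theorem tsub_add_eq_add_tsub_of_le_of_le {α : Type*} [AddCommSemigroup α] [PartialOrder α]
    [ExistsAddOfLE α] [AddLeftMono α] [Sub α] [OrderedSub α] {a x z : α} (hx : a ≤ x)
    (hz : a ≤ z) : x - a + z = x + (z - a) := by
  conv_lhs => rw [← tsub_add_cancel_of_le hz, add_comm (z - a) a, ← add_assoc,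
    tsub_add_cancel_of_le hx]

theorem tsub_nsmul_eq_self {α : Type*} [AddCommMonoid α] [PartialOrder α] [Sub α] [OrderedSub α]
    {x y : α} (h : x - y = x) (n : ℕ) : x - n • y = x := by
  induction n with
  | zero => rw [zero_nsmul, tsub_zero]
  | succ n ih => rw [succ_nsmul, tsub_add_eq_tsub_tsub, ih, h]

structure IsQuasiAdditive {P : Type*} [AddCommMonoid P] (φ : P → ℝ) (D : ℝ) : Prop where
  le_map_add : ∀ p q, φ p + φ q ≤ φ (p + q)
  map_add_le : ∀ p q, φ (p + q) ≤ φ p + φ q + D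

noncomputable def homogenization {P : Type*} [AddCommMonoid P] (φ : P → ℝ) (p : P) : ℝ :=
  limUnder atTop fun n : ℕ => φ (n • p) / n

theorem homogenization_eq_of_map_nsmul {P : Type*} [AddCommMonoid P] {φ : P → ℝ} {p : P} {c : ℝ}
    (h : ∀ n : ℕ, φ (n • p) = n * c) : homogenization φ p = c :=
  Tendsto.limUnder_eq <| tendsto_const_nhds.congr' <| (eventually_ne_atTop 0).mono fun n hn => by
    show c = φ (n • p) / n
    rw [h, mul_div_cancel_left₀ _ (Nat.cast_ne_zero.2 hn)]

namespace IsQuasiAdditive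

variable {P : Type*} [AddCommMonoid P] {φ : P → ℝ} {D : ℝ} (hφ : IsQuasiAdditive φ D)
include hφ

theorem succ_mul_le_map_succ_nsmul (p : P) (n : ℕ) : (n + 1) * φ p ≤ φ ((n + 1) • p) := by
  induction n with
  | zero => simp
  | succ n ih =>
    rw [succ_nsmul _ (n + 1)]
    push_cast
    linarith [hφ.le_map_add ((n + 1) • p) p]

theorem subadditive_map_nsmul_add (p : P) : Subadditive fun n => φ (n • p) + D := fun m n => by
  dsimp only
  rw [add_nsmul]
  linarith [hφ.map_add_le (m • p) (n • p)]

theorem bddBelow_map_nsmul_add_div (p : P) :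
    BddBelow (Set.range fun n : ℕ => (φ (n • p) + D) / n) := by
  have hD : 0 ≤ D := by linarith [hφ.le_map_add 0 0, hφ.map_add_le 0 0]
  refine ⟨min (φ p) 0, ?_⟩
  rintro _ ⟨_ | n, rfl⟩
  · simp
  · rw [le_div_iff₀ (by positivity)]
    push_cast
    nlinarith [hφ.succ_mul_le_map_succ_nsmul p n, min_le_left (φ p) 0, min_le_right (φ p) 0]

theorem tendsto_homogenization (p : P) :
    Tendsto (fun n : ℕ => φ (n • p) / n) atTop (𝓝 (homogenization φ p)) := by
  have h := ((hφ.subadditive_map_nsmul_add p).tendsto_lim (hφ.bddBelow_map_nsmul_add_div p)).sub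
    (tendsto_const_div_atTop_nhds_zero_nat D)
  simp only [add_div, add_sub_cancel_right, sub_zero] at h
  exact tendsto_nhds_limUnder ⟨_, h⟩

theorem homogenization_add (p q : P) :
    homogenization φ (p + q) = homogenization φ p + homogenization φ q := by
  have hdefect :
      Tendsto (fun n : ℕ => (φ (n • (p + q)) - φ (n • p) - φ (n • q)) / n) atTop (𝓝 0) := by
    refine squeeze_zero (fun n => div_nonneg ?_ n.cast_nonneg)
      (fun n => div_le_div_of_nonneg_right ?_ n.cast_nonneg)
      (tendsto_const_div_atTop_nhds_zero_nat D)
    · linarith [nsmul_add p q n ▸ hφ.le_map_add (n • p) (n • q)]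
    · linarith [nsmul_add p q n ▸ hφ.map_add_le (n • p) (n • q)]
  refine tendsto_nhds_unique (hφ.tendsto_homogenization (p + q)) ?_
  have h := ((hφ.tendsto_homogenization p).add (hφ.tendsto_homogenization q)).add hdefect
  rw [add_zero] at h
  exact h.congr fun n => by ring

theorem homogenization_zero : homogenization φ 0 = 0 := by
  have h := hφ.homogenization_add 0 0
  rw [add_zero] at h
  linarith

theorem le_homogenization (p : P) : φ p ≤ homogenization φ p := by
  refine ge_of_tendsto (hφ.tendsto_homogenization p) (eventually_atTop.2 ⟨1, fun n hn => ?_⟩)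
  obtain ⟨n, rfl⟩ := Nat.exists_eq_add_of_le' hn
  rw [le_div_iff₀ (by positivity), mul_comm]
  exact_mod_cast hφ.succ_mul_le_map_succ_nsmul p n

end IsQuasiAdditive

namespace MVAlgebra

variable {A : Type u} {M : MVAlgebra A}

/-- The elements of `M`, written with `x + y` for `x ⊕ y`, `xᶜ` for `¬x`, `⊤` for `¬0`, and
`x - y` for `¬(¬x ⊕ y)`, which is `max 0 (x - y)` in `[0,1]`. -/
def Carrier (_ : MVAlgebra A) : Type u := A

instance : Add M.Carrier := ⟨M.oplus⟩
instance : Zero M.Carrier := ⟨M.zero⟩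

instance : AddCommMonoid M.Carrier where
  add_assoc := M.mv1
  zero_add x := (M.mv2 _ _).trans (M.mv3 x)
  add_zero := M.mv3
  add_comm := M.mv2
  nsmul := nsmulRec
  nsmul_zero _ := rfl
  nsmul_succ _ _ := rfl

instance : Compl M.Carrier := ⟨M.neg⟩
instance : Top M.Carrier := ⟨(0 : M.Carrier)ᶜ⟩
instance : Sub M.Carrier := ⟨fun x y => (xᶜ + y)ᶜ⟩
instance : LE M.Carrier := ⟨fun x y => ∃ z, y = x + z⟩

section Basic

variable (x y z : M.Carrier)

theorem compl_compl : xᶜᶜ = x := M.mv4 x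

theorem add_top : x + ⊤ = ⊤ := M.mv5 x

theorem tsub_def : x - y = (xᶜ + y)ᶜ := rfl

theorem compl_tsub : (x - y)ᶜ = xᶜ + y := compl_compl _

theorem compl_add : (x + y)ᶜ = xᶜ - y := by rw [tsub_def, compl_compl]

theorem compl_top : (⊤ : M.Carrier)ᶜ = 0 := compl_compl 0

theorem tsub_compl_comm : x - yᶜ = y - xᶜ := by rw [tsub_def, tsub_def, add_comm]

theorem tsub_add_self_comm : x - y + y = y - x + x := by
  rw [tsub_def, tsub_def, add_comm yᶜ]
  exact M.mv6 x y

theorem add_compl_self : x + xᶜ = ⊤ := by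
  have h := tsub_add_self_comm ⊤ x
  rwa [add_top, tsub_def, compl_top, zero_add, add_comm] at h

theorem tsub_eq_zero_of_le' {x y : Carrier M} (h : x ≤ y) : x - y = 0 := by
  obtain ⟨z, rfl⟩ := h
  rw [tsub_def, ← add_assoc, add_comm xᶜ, add_compl_self, add_comm, add_top, compl_top]

theorem le_of_tsub_eq_zero {x y : M.Carrier} (h : x - y = 0) : x ≤ y :=
  ⟨y - x, by rw [add_comm, ← tsub_add_self_comm, h, zero_add]⟩

end Basic

instance : PartialOrder M.Carrier where
  le_refl x := ⟨0, (add_zero x).symm⟩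
  le_trans := by
    rintro x _ _ ⟨a, rfl⟩ ⟨b, rfl⟩
    exact ⟨a + b, add_assoc x a b⟩
  le_antisymm x y hxy hyx := by
    rw [← zero_add x, ← tsub_eq_zero_of_le' hyx, tsub_add_self_comm,
      tsub_eq_zero_of_le' hxy, zero_add]

instance : IsOrderedAddMonoid M.Carrier where
  add_le_add_left := by
    rintro _ _ ⟨z, rfl⟩ c
    exact ⟨z, add_right_comm _ z c⟩

instance : CanonicallyOrderedAdd M.Carrier where
  exists_add_of_le h := h
  le_add_self a b := ⟨b, add_comm b a⟩
  le_self_add _ b := ⟨b, rfl⟩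

theorem compl_le_compl {x y : M.Carrier} (h : x ≤ y) : yᶜ ≤ xᶜ := by
  obtain ⟨z, rfl⟩ := h
  apply le_of_tsub_eq_zero
  rw [tsub_def, compl_compl, add_right_comm, add_compl_self, add_comm, add_top, compl_top]

theorem add_tsub_le_left (x y : M.Carrier) : x + y - y ≤ x := by
  apply le_of_tsub_eq_zero
  rw [tsub_def, compl_tsub, add_assoc, add_comm y, add_comm, add_compl_self, compl_top]

instance : OrderedSub M.Carrier where
  tsub_le_iff_right x y z := by
    refine ⟨fun h => ?_, fun h => ?_⟩
    · calc x ≤ y - x + x := le_add_self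
        _ = x - y + y := (tsub_add_self_comm x y).symm
        _ ≤ z + y := add_le_add_left h y
    · calc x - y ≤ z + y - y := compl_le_compl (add_le_add_left (compl_le_compl h) y)
        _ ≤ z := add_tsub_le_left z y

instance : BoundedOrder M.Carrier where
  top := ⊤
  le_top x := ⟨xᶜ, (add_compl_self x).symm⟩
  bot := 0
  bot_le x := ⟨x, (zero_add x).symm⟩

theorem compl_injective : Function.Injective (compl : M.Carrier → M.Carrier) :=
  fun x y h => by rw [← compl_compl x, h, compl_compl]

theorem compl_tsub_compl (x y : M.Carrier) : xᶜ - yᶜ = y - x := by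
  rw [tsub_compl_comm, compl_compl]

theorem tsub_tsub_compl (x y : M.Carrier) : y - (y - xᶜ) = x + y - x := by
  rw [tsub_def y (y - xᶜ), tsub_def (x + y) x]
  congr 1
  rw [tsub_compl_comm y x, add_comm yᶜ, add_comm x y, compl_add, tsub_add_self_comm]

theorem add_tsub_cancel_left_of_le_compl {x y : M.Carrier} (h : y ≤ xᶜ) : x + y - x = y := by
  rw [← tsub_tsub_compl, tsub_eq_zero_of_le h, tsub_zero]

theorem eq_of_add_eq_add_of_le_compl {a u v : M.Carrier} (hu : u ≤ aᶜ) (hv : v ≤ aᶜ)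
    (h : a + u = a + v) : u = v := by
  rw [← add_tsub_cancel_left_of_le_compl hu, h, add_tsub_cancel_left_of_le_compl hv]

theorem tsub_compl_add_add (x y : M.Carrier) : x - yᶜ + (x + y) = x + y :=
  calc x - yᶜ + (x + y) = y - xᶜ + (x + y - x + x) := by
        rw [tsub_compl_comm, tsub_add_cancel_of_le le_self_add]
    _ = y - xᶜ + (y - (y - xᶜ)) + x := by rw [tsub_tsub_compl, add_assoc]
    _ = x + y := by rw [add_tsub_cancel_of_le tsub_le_self, add_comm]

theorem tsub_tsub_tsub_swap (x y : M.Carrier) : y - x - (x - y) = y - x := by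
  apply compl_injective
  have h := tsub_compl_add_add yᶜ x
  rw [tsub_compl_comm, compl_compl] at h
  rw [compl_tsub, compl_tsub, add_comm, h]

def distance (x y : M.Carrier) : M.Carrier := x - y + (y - x)

theorem distance_triangle (x y z : M.Carrier) : distance x z ≤ distance x y + distance y z :=
  (add_le_add (tsub_le_tsub_add_tsub (b := y)) (tsub_le_tsub_add_tsub (b := y))).trans_eq (by
    rw [distance, distance]; ac_rfl)

theorem distance_add_add_le (x y u v : M.Carrier) :
    distance (x + u) (y + v) ≤ distance x y + distance u v :=
  (add_le_add add_tsub_add_le_tsub_add_tsub add_tsub_add_le_tsub_add_tsub).trans_eq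
    (add_add_add_comm _ _ _ _)

theorem distance_compl (x y : M.Carrier) : distance xᶜ yᶜ = distance x y := by
  rw [distance, distance, compl_tsub_compl, compl_tsub_compl, add_comm]

def principalCongr (c : M.Carrier) (x y : M.Carrier) : Prop := ∃ n : ℕ, distance x y ≤ n • c

theorem isMVCongruence_principalCongr (c : M.Carrier) : IsMVCongruence M (principalCongr c) := by
  refine ⟨⟨fun (x : M.Carrier) => ⟨0, by simp [distance]⟩,
    fun {x y : M.Carrier} ⟨n, h⟩ => ⟨n, ?_⟩, fun ⟨m, hm⟩ ⟨n, hn⟩ => ⟨m + n, ?_⟩⟩,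
    fun (x y u v : M.Carrier) ⟨m, hm⟩ ⟨n, hn⟩ => ⟨m + n, ?_⟩,
    fun (x y : M.Carrier) ⟨n, hn⟩ => ⟨n, ?_⟩⟩
  · rwa [distance, add_comm]
  · rw [add_nsmul]; exact (distance_triangle _ _ _).trans (add_le_add hm hn)
  · rw [add_nsmul]; exact (distance_add_add_le x y u v).trans (add_le_add hm hn)
  · exact (distance_compl x y).trans_le hn

theorem _root_.IsSimpleMV.nontrivial (hs : IsSimpleMV M) : Nontrivial M.Carrier := by
  by_contra h
  rw [not_nontrivial_iff_subsingleton] at h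
  exact hs.1 (funext₂ fun a b => propext (iff_true_intro (@Subsingleton.elim M.Carrier h a b)))

theorem _root_.IsSimpleMV.exists_nsmul_eq_top (hs : IsSimpleMV M) {c : M.Carrier} (hc : c ≠ 0) :
    ∃ n : ℕ, n • c = ⊤ := by
  rcases hs.2 _ (isMVCongruence_principalCongr c) with h | h
  · have hc0 : principalCongr c c 0 := ⟨1, by simp [distance]⟩
    exact absurd ((congr_fun₂ h c 0).mp hc0) hc
  · obtain ⟨n, hn⟩ : principalCongr c ⊤ 0 := by rw [h]; trivial
    exact ⟨n, top_le_iff.1 (by simpa [distance] using hn)⟩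

theorem _root_.IsSimpleMV.total (hs : IsSimpleMV M) : Std.Total (α := M.Carrier) (· ≤ ·) := by
  refine ⟨fun a b => or_iff_not_imp_left.2 fun hab => ?_⟩
  obtain ⟨n, hn⟩ := hs.exists_nsmul_eq_top (tsub_eq_zero_iff_le.not.2 hab)
  have h := tsub_nsmul_eq_self (tsub_tsub_tsub_swap a b) n
  rw [hn, tsub_eq_zero_of_le le_top] at h
  exact tsub_eq_zero_iff_le.1 h.symm

theorem _root_.IsSimpleMV.injective (hs : IsSimpleMV M) {B : Type*}
    {f : A → B} (g : B → B → B) (k : B → B) (hadd : ∀ x y, f (M.oplus x y) = g (f x) (f y))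
    (hneg : ∀ x, f (M.neg x) = k (f x)) (hf : f M.zero ≠ f (M.neg M.zero)) :
    Function.Injective f := by
  have hker : IsMVCongruence M fun x y => f x = f y :=
    ⟨⟨fun _ => rfl, Eq.symm, Eq.trans⟩,
      fun _ _ _ _ (hab : f _ = f _) (hcd : f _ = f _) => by simp only [hadd, hab, hcd],
      fun _ _ (hab : f _ = f _) => by simp only [hneg, hab]⟩
  rcases hs.2 _ hker with h | h
  · exact fun x y hxy => (congr_fun₂ h x y).mp hxy
  · exact absurd ((congr_fun₂ h _ _).mpr trivial) hf

theorem add_eq_top_iff_compl_le {x y : M.Carrier} : x + y = ⊤ ↔ yᶜ ≤ x := by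
  rw [← tsub_eq_zero_iff_le, tsub_def, compl_compl, add_comm, ← compl_top,
    compl_injective.eq_iff]

theorem add_tsub_compl_eq_tsub_compl_add {x y z : M.Carrier} (hxy : y ≤ xᶜ) (hzy : y ≤ zᶜ) :
    x + y - zᶜ = x - (y + z)ᶜ := by
  apply compl_injective
  rw [compl_tsub, compl_tsub, add_comm y z, compl_add, compl_add,
    tsub_add_eq_add_tsub_of_le_of_le hxy hzy]

theorem add_tsub_assoc_of_le_compl {x y z : M.Carrier} (hxy : x ≤ yᶜ) (hzy : zᶜ ≤ y) :
    x + y - zᶜ = x + (y - zᶜ) := by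
  have hyz : yᶜ ≤ z := compl_compl z ▸ compl_le_compl hzy
  refine eq_of_add_eq_add_of_le_compl (a := zᶜ) ?_ ?_ ?_
  · rw [compl_compl, tsub_le_iff_right, add_compl_self]
    exact le_top
  · rw [compl_compl]
    calc x + (y - zᶜ) ≤ yᶜ + (y - zᶜ) := add_le_add_left hxy _
      _ = z := by rw [tsub_compl_comm, add_comm, tsub_add_cancel_of_le hyz]
  · rw [add_comm zᶜ (x + y - zᶜ), tsub_add_cancel_of_le (hzy.trans le_add_self), add_left_comm,
      add_comm zᶜ, tsub_add_cancel_of_le hzy]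

theorem zero_ne_top [Nontrivial M.Carrier] : (0 : M.Carrier) ≠ ⊤ := bot_ne_top

theorem le_compl_of_add_ne_top [Std.Total (α := M.Carrier) (· ≤ ·)] {x y : M.Carrier}
    (h : x + y ≠ ⊤) : x ≤ yᶜ :=
  (total_of (· ≤ ·) x yᶜ).resolve_right (mt add_eq_top_iff_compl_le.2 h)

/-- `⟨n, x⟩` stands for `n + x`. Over a chain, these are the elements of the positive cone of
Chang's `ℓ`-group; `carry` and `fracAdd` below are the integer and fractional parts of `x + y`. -/
@[ext]
structure Carry (M : MVAlgebra A) where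
  int : ℕ
  frac : M.Carrier
  frac_ne_top : frac ≠ ⊤

open Classical in
noncomputable def carry (x y : M.Carrier) : ℕ := if x + y = ⊤ then 1 else 0

open Classical in
noncomputable def fracAdd (x y : M.Carrier) : M.Carrier := if x + y = ⊤ then x - yᶜ else x + y

section FracAdd

variable {x y : M.Carrier}

theorem carry_of_add_eq_top (h : x + y = ⊤) : carry x y = 1 := if_pos h
theorem carry_of_add_ne_top (h : x + y ≠ ⊤) : carry x y = 0 := if_neg h
theorem fracAdd_of_add_eq_top (h : x + y = ⊤) : fracAdd x y = x - yᶜ := if_pos h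
theorem fracAdd_of_add_ne_top (h : x + y ≠ ⊤) : fracAdd x y = x + y := if_neg h

theorem carry_le_one (x y : M.Carrier) : carry x y ≤ 1 := by
  unfold carry; split_ifs <;> simp

theorem fracAdd_ne_top (hx : x ≠ ⊤) (y : M.Carrier) : fracAdd x y ≠ ⊤ := by
  unfold fracAdd
  split_ifs with h
  · exact ne_top_of_le_ne_top hx tsub_le_self
  · exact h

theorem carry_comm (x y : M.Carrier) : carry x y = carry y x := by
  rw [carry, carry, add_comm]

theorem fracAdd_comm (x y : M.Carrier) : fracAdd x y = fracAdd y x := by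
  rw [fracAdd, fracAdd, add_comm, tsub_compl_comm]

theorem carry_cocycle_and_fracAdd_assoc [Std.Total (α := M.Carrier) (· ≤ ·)]
    (x y z : M.Carrier) :
    carry x y + carry (fracAdd x y) z = carry y z + carry x (fracAdd y z) ∧
      fracAdd (fracAdd x y) z = fracAdd x (fracAdd y z) := by
  by_cases hxy : x + y = ⊤ <;> by_cases hyz : y + z = ⊤
  · have h : x - yᶜ + z = x + (y - zᶜ) := by
      rw [tsub_add_eq_add_tsub_of_le_of_le (add_eq_top_iff_compl_le.1 hxy)
        (add_eq_top_iff_compl_le.1 (add_comm y z ▸ hyz)), tsub_compl_comm z y]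
    have h' : x - yᶜ - zᶜ = x - (y - zᶜ)ᶜ := by rw [compl_tsub, tsub_tsub]
    rw [carry_of_add_eq_top hxy, fracAdd_of_add_eq_top hxy, carry_of_add_eq_top hyz,
      fracAdd_of_add_eq_top hyz, carry, carry, fracAdd, fracAdd, h, h']
    exact ⟨rfl, rfl⟩
  · have h1 : x - yᶜ + z ≠ ⊤ := ne_top_of_le_ne_top hyz <|
      add_le_add_left (tsub_le_iff_right.2 (add_compl_self y ▸ le_top)) z
    have h2 : x + (y + z) = ⊤ := by rw [← add_assoc, hxy, add_comm, add_top]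
    have h : x - yᶜ + z = x - (y + z)ᶜ := by
      rw [tsub_compl_comm x y, tsub_compl_comm x (y + z), add_comm y z, add_comm _ z]
      exact (add_tsub_assoc_of_le_compl (le_compl_of_add_ne_top (add_comm y z ▸ hyz))
        (add_eq_top_iff_compl_le.1 (add_comm x y ▸ hxy))).symm
    rw [carry_of_add_eq_top hxy, fracAdd_of_add_eq_top hxy, carry_of_add_ne_top hyz,
      fracAdd_of_add_ne_top hyz, carry_of_add_ne_top h1, fracAdd_of_add_ne_top h1,
      carry_of_add_eq_top h2, fracAdd_of_add_eq_top h2, h]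
    exact ⟨rfl, rfl⟩
  · have h1 : x + y + z = ⊤ := by rw [add_assoc, hyz, add_top]
    have h2 : x + (y - zᶜ) ≠ ⊤ := ne_top_of_le_ne_top hxy (add_le_add_right tsub_le_self x)
    rw [carry_of_add_ne_top hxy, fracAdd_of_add_ne_top hxy, carry_of_add_eq_top hyz,
      fracAdd_of_add_eq_top hyz, carry_of_add_eq_top h1, fracAdd_of_add_eq_top h1,
      carry_of_add_ne_top h2, fracAdd_of_add_ne_top h2,
      add_tsub_assoc_of_le_compl (le_compl_of_add_ne_top hxy) (add_eq_top_iff_compl_le.1 hyz)]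
    exact ⟨rfl, rfl⟩
  · have h := add_tsub_compl_eq_tsub_compl_add (z := z)
      (le_compl_of_add_ne_top (add_comm x y ▸ hxy)) (le_compl_of_add_ne_top hyz)
    rw [carry_of_add_ne_top hxy, fracAdd_of_add_ne_top hxy, carry_of_add_ne_top hyz,
      fracAdd_of_add_ne_top hyz, carry, carry, fracAdd, fracAdd, h, add_assoc]
    exact ⟨rfl, rfl⟩

end FracAdd

namespace Carry

noncomputable instance : Add M.Carry :=
  ⟨fun p q => ⟨p.int + q.int + carry p.frac q.frac, fracAdd p.frac q.frac,
    fracAdd_ne_top p.frac_ne_top _⟩⟩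

theorem int_add (p q : M.Carry) : (p + q).int = p.int + q.int + carry p.frac q.frac := rfl

theorem frac_add (p q : M.Carry) : (p + q).frac = fracAdd p.frac q.frac := rfl

protected theorem add_comm (p q : M.Carry) : p + q = q + p := by
  ext
  · rw [int_add, int_add, carry_comm, Nat.add_comm p.int]
  · rw [frac_add, frac_add, fracAdd_comm]

variable [Nontrivial M.Carrier]

instance : Zero M.Carry := ⟨⟨0, 0, zero_ne_top⟩⟩

theorem int_zero : (0 : M.Carry).int = 0 := rfl

theorem frac_zero : (0 : M.Carry).frac = 0 := rfl

protected theorem zero_add (p : M.Carry) : 0 + p = p := by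
  have h : (0 : M.Carrier) + p.frac ≠ ⊤ := by rw [zero_add]; exact p.frac_ne_top
  ext
  · rw [int_add, int_zero, frac_zero, carry_of_add_ne_top h, Nat.zero_add, Nat.add_zero]
  · rw [frac_add, frac_zero, fracAdd_of_add_ne_top h, zero_add]

open Classical in
noncomputable def of (x : M.Carrier) : M.Carry :=
  if h : x = ⊤ then ⟨1, 0, zero_ne_top⟩ else ⟨0, x, h⟩

theorem of_zero : of (0 : M.Carrier) = 0 := dif_neg zero_ne_top

theorem of_add {x y : M.Carrier} (h : x + y ≠ ⊤) : of (x + y) = of x + of y := by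
  have hx : x ≠ ⊤ := fun hx => h (by rw [hx, add_comm, add_top])
  have hy : y ≠ ⊤ := fun hy => h (by rw [hy, add_top])
  rw [of, of, of, dif_neg h, dif_neg hx, dif_neg hy]
  ext
  · rw [int_add, carry_of_add_ne_top h]; rfl
  · rw [frac_add, fracAdd_of_add_ne_top h]

theorem one_le_int_of_add_of {x y : M.Carrier} (h : x + y = ⊤) : 1 ≤ (of x + of y).int := by
  rw [int_add]
  unfold of
  split_ifs <;> simp [carry_of_add_eq_top h, Nat.le_add_right_of_le]

variable [Std.Total (α := M.Carrier) (· ≤ ·)]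

noncomputable instance : AddCommMonoid M.Carry where
  add_assoc p q r := by
    obtain ⟨hint, hfrac⟩ := carry_cocycle_and_fracAdd_assoc p.frac q.frac r.frac
    ext
    · simp only [int_add, frac_add]; omega
    · exact hfrac
  zero_add := Carry.zero_add
  add_zero p := (Carry.add_comm p 0).trans (Carry.zero_add p)
  add_comm := Carry.add_comm
  nsmul := nsmulRec
  nsmul_zero _ := rfl
  nsmul_succ _ _ := rfl

theorem isQuasiAdditive_int : IsQuasiAdditive (fun p : M.Carry => (p.int : ℝ)) 1 where
  le_map_add p q := by
    rw [int_add]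
    exact_mod_cast Nat.le_add_right _ _
  map_add_le p q := by
    rw [int_add]
    exact_mod_cast Nat.add_le_add_left (carry_le_one p.frac q.frac) _

theorem of_add_of_compl (x : M.Carrier) : of x + of xᶜ = of ⊤ := by
  by_cases hx : x = ⊤
  · rw [hx, compl_top, of_zero, add_zero]
  by_cases hxc : xᶜ = ⊤
  · have hx0 : x = 0 := by rw [← compl_compl x, hxc, compl_top]
    rw [hxc, hx0, of_zero, zero_add]
  rw [of, of, dif_neg hx, dif_neg hxc, of, dif_pos rfl]
  ext
  · rw [int_add, carry_of_add_eq_top (add_compl_self x)]; rfl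
  · rw [frac_add, fracAdd_of_add_eq_top (add_compl_self x), compl_compl, tsub_self]

theorem int_nsmul_of_top (n : ℕ) : (n • of (⊤ : M.Carrier)).int = n := by
  have h0 : (0 : M.Carrier) + 0 ≠ ⊤ := by rw [zero_add]; exact zero_ne_top
  have h : n • of (⊤ : M.Carrier) = ⟨n, 0, zero_ne_top⟩ := by
    induction n with
    | zero => rfl
    | succ n ih =>
      rw [succ_nsmul, ih, of, dif_pos rfl]
      ext
      · rw [int_add, carry_of_add_ne_top h0]
      · rw [frac_add, fracAdd_of_add_ne_top h0, zero_add]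
  rw [h]

end Carry

variable [Nontrivial M.Carrier] [Std.Total (α := M.Carrier) (· ≤ ·)]

noncomputable def toReal (x : M.Carrier) : ℝ :=
  homogenization (fun p : M.Carry => (p.int : ℝ)) (Carry.of x)

theorem toReal_nonneg (x : M.Carrier) : 0 ≤ toReal x :=
  (Nat.cast_nonneg _).trans (Carry.isQuasiAdditive_int.le_homogenization _)

theorem toReal_zero : toReal (0 : M.Carrier) = 0 := by
  rw [toReal, Carry.of_zero, Carry.isQuasiAdditive_int.homogenization_zero]

theorem toReal_top : toReal (⊤ : M.Carrier) = 1 :=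
  homogenization_eq_of_map_nsmul fun n => by rw [Carry.int_nsmul_of_top, mul_one]

theorem toReal_add_toReal_compl (x : M.Carrier) : toReal x + toReal xᶜ = 1 := by
  rw [toReal, toReal, ← Carry.isQuasiAdditive_int.homogenization_add, Carry.of_add_of_compl,
    ← toReal, toReal_top]

theorem toReal_compl (x : M.Carrier) : toReal xᶜ = 1 - toReal x := by
  linarith [toReal_add_toReal_compl x]

theorem toReal_le_one (x : M.Carrier) : toReal x ≤ 1 := by
  linarith [toReal_add_toReal_compl x, toReal_nonneg xᶜ]

theorem toReal_add (x y : M.Carrier) : toReal (x + y) = min 1 (toReal x + toReal y) := by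
  by_cases h : x + y = ⊤
  · have hle : 1 ≤ toReal x + toReal y := by
      rw [toReal, toReal, ← Carry.isQuasiAdditive_int.homogenization_add]
      exact le_trans (by exact_mod_cast Carry.one_le_int_of_add_of h)
        (Carry.isQuasiAdditive_int.le_homogenization _)
    rw [h, toReal_top, min_eq_left hle]
  · have hadd : toReal (x + y) = toReal x + toReal y := by
      rw [toReal, Carry.of_add h, Carry.isQuasiAdditive_int.homogenization_add]
      rfl
    rw [hadd, min_eq_right (hadd ▸ toReal_le_one _)]

end MVAlgebra

/-- Every simple MV-algebra is isomorphic to a subalgebra of the MV-algebra [0,1]. -/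
theorem simple_embeds_in_unit_interval {A : Type u} (M : MVAlgebra A) (h : IsSimpleMV M) :
    ∃ f : A → Set.Icc (0 : ℝ) 1, Function.Injective f ∧
      ((f M.zero : ℝ) = 0) ∧
      (∀ x, (f (M.neg x) : ℝ) = 1 - (f x : ℝ)) ∧
      (∀ x y, (f (M.oplus x y) : ℝ) = min 1 ((f x : ℝ) + (f y : ℝ))) := by
  have := h.nontrivial
  have := h.total
  have hinj : Function.Injective (MVAlgebra.toReal (M := M)) :=
    h.injective (fun a b => min 1 (a + b)) (1 - ·) MVAlgebra.toReal_add MVAlgebra.toReal_compl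
      (show MVAlgebra.toReal (0 : M.Carrier) ≠ MVAlgebra.toReal ⊤ by
        rw [MVAlgebra.toReal_zero, MVAlgebra.toReal_top]; exact zero_ne_one)
  exact ⟨fun x => ⟨MVAlgebra.toReal x, MVAlgebra.toReal_nonneg x, MVAlgebra.toReal_le_one x⟩,
    fun x y hxy => hinj (Subtype.mk.inj hxy), MVAlgebra.toReal_zero,
    MVAlgebra.toReal_compl, MVAlgebra.toReal_add⟩
end

section
/- Every finite MV-algebra is isomorphic to a finite direct product of finite simple MV-algebras Łₙ; that is, if A is a finite MV-algebra, then there exist l ∈ ℕ, positive natural numbers n₀, …, n_{l−1}, and a bijective homomorphism from A onto the product ∏_{i<l} Ł_{n_i}, where the product carries the componentwise operations. -/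
universe u v

/-!
A Boolean element `b` (one with `b ⊕ b = b`) splits an MV-algebra as the product of the
intervals `[0, b]` and `[0, ¬b]` via `x ↦ (b ⊙ x, ¬b ⊙ x)`, each interval being an MV-algebra
with negation `u ↦ b ⊙ ¬u`. By induction on the cardinality it therefore suffices to treat
finite algebras whose only Boolean elements are `0` and `1`. In such an algebra the multiples
`k • x` of any `x ≠ 0` stabilise at a Boolean element and hence reach `1`. It follows that an
atom `c` lies below every nonzero `x` and that `x ⊙ ¬c < x`, so every element is a multiple of
`c`; if `m` is least with `m • c = 1`, then `k • c ↦ k / m` is an isomorphism onto `Łₘ`.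
-/

def lukOfNat (n : ℕ+) (k : ℕ) : Luk n :=
  ⟨(min k n : ℕ) / (n : ℕ), min k n, min_le_right _ _, rfl⟩

theorem lukOfNat_surjective (n : ℕ+) : Function.Surjective (lukOfNat n) := by
  rintro ⟨_, k, hk, rfl⟩
  exact ⟨k, by simp [lukOfNat, min_eq_left hk]⟩

section LukOfNat

variable {n : ℕ+}

theorem lukOfNat_eq_iff {i j : ℕ} : lukOfNat n i = lukOfNat n j ↔ min i n = min j n := by
  have hn : ((n : ℕ) : ℚ) ≠ 0 := by exact_mod_cast n.ne_zero
  rw [Subtype.ext_iff, lukOfNat, lukOfNat, div_left_inj' hn, Nat.cast_inj]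

theorem lukOplus_lukOfNat (i j : ℕ) :
    lukOplus (lukOfNat n i) (lukOfNat n j) = lukOfNat n (i + j) := by
  have hn : (0 : ℚ) < (n : ℕ) := by exact_mod_cast n.pos
  apply Subtype.ext
  change min 1 (_ / _ + _ / _) = _ / _
  rw [← add_div, ← div_self hn.ne', min_div_div_right hn.le,
    show min (i + j) (n : ℕ) = min (n : ℕ) (min i n + min j n) by omega]
  push_cast
  rfl

theorem lukNeg_lukOfNat (k : ℕ) : lukNeg (lukOfNat n k) = lukOfNat n (n - k) := by
  have hn : ((n : ℕ) : ℚ) ≠ 0 := by exact_mod_cast n.ne_zero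
  apply Subtype.ext
  change 1 - _ / _ = _ / _
  rw [show min ((n : ℕ) - k) (n : ℕ) = (n : ℕ) - min k n by omega,
    Nat.cast_sub (min_le_right _ _), sub_div, div_self hn]

theorem lukOfNat_zero : lukOfNat n 0 = lukZero n := by
  simp [lukOfNat, lukZero]

end LukOfNat

theorem Function.Surjective.exists_bijective_comp_eq {α β γ : Type*} {s : γ → α}
    {t : γ → β} (hs : Function.Surjective s) (ht : Function.Surjective t)
    (h : ∀ i j, s i = s j ↔ t i = t j) :
    ∃ f : α → β, Function.Bijective f ∧ ∀ k, f (s k) = t k := by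
  have hf : ∀ k, t (Function.surjInv hs (s k)) = t k := fun k =>
    (h _ _).mp (Function.surjInv_eq hs (s k))
  refine ⟨t ∘ Function.surjInv hs, ⟨fun x y hxy => ?_, fun b => ?_⟩, hf⟩
  · rw [← Function.surjInv_eq hs x, ← Function.surjInv_eq hs y]
    exact (h _ _).mpr hxy
  · obtain ⟨k, rfl⟩ := ht b
    exact ⟨s k, hf k⟩

namespace MVAlgebra

variable {A : Type u} (M : MVAlgebra A)

instance : Std.Associative M.oplus := ⟨M.mv1⟩

instance : Std.Commutative M.oplus := ⟨M.mv2⟩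

def one : A := M.neg M.zero

def le (x y : A) : Prop := M.oplus (M.neg x) y = M.one

def odot (x y : A) : A := M.neg (M.oplus (M.neg x) (M.neg y))

def nsmul : ℕ → A → A
  | 0, _ => M.zero
  | k + 1, x => M.oplus (nsmul k x) x

def IsBoolean (b : A) : Prop := M.oplus b b = b

def IsAtom (c : A) : Prop := c ≠ M.zero ∧ ∀ y, M.le y c → y = M.zero ∨ y = c

def HasTrivialBooleanCenter : Prop := ∀ b, M.IsBoolean b → b = M.zero ∨ b = M.one

theorem zero_oplus (x : A) : M.oplus M.zero x = x := by rw [M.mv2, M.mv3]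

theorem oplus_one (x : A) : M.oplus x M.one = M.one := M.mv5 x

theorem one_oplus (x : A) : M.oplus M.one x = M.one := by rw [M.mv2, oplus_one]

theorem neg_one : M.neg M.one = M.zero := M.mv4 M.zero

theorem neg_injective : Function.Injective M.neg := fun x y h => by
  rw [← M.mv4 x, h, M.mv4]

theorem neg_oplus_self (x : A) : M.oplus (M.neg x) x = M.one := by
  have h := M.mv6 x M.one
  rwa [oplus_one, neg_one, M.mv3, eq_comm] at h

theorem le_refl (x : A) : M.le x x := M.neg_oplus_self x

theorem zero_le (x : A) : M.le M.zero x := M.one_oplus x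

theorem le_one (x : A) : M.le x M.one := M.oplus_one _

theorem le_oplus_left (x z : A) : M.le x (M.oplus x z) := by
  rw [le, ← M.mv1, neg_oplus_self, one_oplus]

theorem le_oplus_right (x z : A) : M.le x (M.oplus z x) := M.mv2 x z ▸ M.le_oplus_left x z

variable {M}

theorem le.exists_eq_oplus {x y : A} (h : M.le x y) : ∃ z, y = M.oplus x z := by
  refine ⟨M.neg (M.oplus x (M.neg y)), ?_⟩
  have h6 := M.mv6 x y
  rw [h, neg_one, zero_oplus] at h6
  exact h6.trans (M.mv2 _ _)

theorem le.trans {x y z : A} (h₁ : M.le x y) (h₂ : M.le y z) : M.le x z := by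
  obtain ⟨a, rfl⟩ := h₁.exists_eq_oplus
  obtain ⟨b, rfl⟩ := h₂.exists_eq_oplus
  rw [M.mv1]
  exact M.le_oplus_left x _

theorem le.antisymm {x y : A} (h₁ : M.le x y) (h₂ : M.le y x) : x = y := by
  have h6 := M.mv6 x y
  rwa [h₁, M.mv2 x, h₂, neg_one, zero_oplus, zero_oplus, eq_comm] at h6

theorem eq_zero_of_le_zero {x : A} (h : M.le x M.zero) : x = M.zero :=
  h.antisymm (M.zero_le x)

theorem eq_one_of_one_le {x : A} (h : M.le M.one x) : x = M.one :=
  (M.le_one x).antisymm h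

theorem oplus_le_oplus {x y z w : A} (h₁ : M.le x y) (h₂ : M.le z w) :
    M.le (M.oplus x z) (M.oplus y w) := by
  obtain ⟨a, rfl⟩ := h₁.exists_eq_oplus
  obtain ⟨b, rfl⟩ := h₂.exists_eq_oplus
  have : M.oplus (M.oplus x a) (M.oplus z b) = M.oplus (M.oplus x z) (M.oplus a b) := by ac_rfl
  rw [this]
  exact M.le_oplus_left _ _

theorem neg_le_neg {x y : A} (h : M.le x y) : M.le (M.neg y) (M.neg x) := by
  rwa [le, M.mv4, M.mv2]

variable (M) in
abbrev toPartialOrder : PartialOrder A where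
  le := M.le
  le_refl := M.le_refl
  le_trans _ _ _ := le.trans
  le_antisymm _ _ := le.antisymm

variable (M)

theorem odot_neg_oplus_comm (x y : A) :
    M.odot x (M.oplus (M.neg x) y) = M.odot y (M.oplus (M.neg y) x) := by
  have h := M.mv6 (M.neg x) (M.neg y)
  rw [M.mv4, M.mv4] at h
  rw [odot, odot, M.mv2 (M.neg x), M.mv2 (M.neg y), M.mv2 (M.neg y) x, h]

theorem odot_comm (x y : A) : M.odot x y = M.odot y x := by rw [odot, odot, M.mv2]

theorem odot_assoc (x y z : A) : M.odot (M.odot x y) z = M.odot x (M.odot y z) := by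
  rw [odot, odot, odot, odot, M.mv4, M.mv4, M.mv1]

theorem odot_one (x : A) : M.odot x M.one = x := by rw [odot, neg_one, M.mv3, M.mv4]

theorem odot_neg_self (x : A) : M.odot x (M.neg x) = M.zero := by
  rw [odot, M.mv4, M.neg_oplus_self, neg_one]

theorem neg_odot (x y : A) : M.neg (M.odot x y) = M.oplus (M.neg x) (M.neg y) := M.mv4 _

theorem odot_le_left (x y : A) : M.le (M.odot x y) x := by
  have : M.oplus (M.oplus (M.neg x) (M.neg y)) x = M.oplus (M.oplus (M.neg x) x) (M.neg y) := by
    ac_rfl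
  rw [le, odot, M.mv4, this, neg_oplus_self, one_oplus]

theorem odot_le_right (x y : A) : M.le (M.odot x y) y := M.odot_comm y x ▸ M.odot_le_left y x

theorem le_odot_neg_oplus (x y : A) : M.le x (M.oplus (M.odot x (M.neg y)) y) := by
  rw [odot, M.mv4, M.mv6]
  exact M.le_oplus_right x _

theorem odot_oplus_le (x y z : A) :
    M.le (M.odot x (M.oplus y z)) (M.oplus (M.odot x y) z) := by
  have hy : M.le (M.neg y) (M.oplus (M.neg (M.oplus y z)) z) := by
    simpa only [odot, M.mv4] using M.le_odot_neg_oplus (M.neg y) z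
  have key := oplus_le_oplus (M.le_refl (M.neg x)) hy
  rw [le] at key ⊢
  simp only [odot, M.mv4]
  rw [← key]
  ac_rfl

variable {M}

theorem odot_mono {x y z w : A} (h₁ : M.le x y) (h₂ : M.le z w) :
    M.le (M.odot x z) (M.odot y w) :=
  neg_le_neg (oplus_le_oplus (neg_le_neg h₁) (neg_le_neg h₂))

theorem odot_eq_zero_of_le_neg {x y : A} (h : M.le y (M.neg x)) : M.odot x y = M.zero :=
  eq_zero_of_le_zero (M.odot_neg_self x ▸ odot_mono (M.le_refl x) h)

theorem odot_neg_oplus_of_le {x y : A} (h : M.le y x) : M.odot x (M.oplus (M.neg x) y) = y := by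
  rw [odot_neg_oplus_comm, h, odot_one]

theorem odot_neg_oplus_cancel_of_le {x y : A} (h : M.le y x) :
    M.oplus (M.odot x (M.neg y)) y = x := by
  rw [odot, M.mv4, M.mv6, M.mv2 x, h, neg_one, zero_oplus]

theorem odot_neg_eq_zero_iff {x y : A} : M.odot x (M.neg y) = M.zero ↔ M.le x y := by
  rw [odot, M.mv4, ← neg_one, M.neg_injective.eq_iff, le]

theorem odot_neg_eq_self_iff {x y : A} :
    M.odot x (M.neg y) = x ↔ M.oplus (M.neg x) y = M.neg x := by
  rw [odot, M.mv4, ← M.neg_injective.eq_iff, M.mv4]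

variable (M)

theorem nsmul_add (x : A) (i j : ℕ) :
    M.nsmul (i + j) x = M.oplus (M.nsmul i x) (M.nsmul j x) := by
  induction j with
  | zero => exact (M.mv3 _).symm
  | succ j ih => rw [← Nat.add_assoc, nsmul, nsmul, ih, M.mv1]

theorem nsmul_mono (x : A) {i j : ℕ} (h : i ≤ j) : M.le (M.nsmul i x) (M.nsmul j x) := by
  obtain ⟨d, rfl⟩ := Nat.exists_eq_add_of_le h
  rw [nsmul_add]
  exact M.le_oplus_left _ _

variable {M}

theorem oplus_nsmul_of_oplus_eq {x y : A} (h : M.oplus y x = y) (k : ℕ) :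
    M.oplus y (M.nsmul k x) = y := by
  induction k with
  | zero => exact M.mv3 y
  | succ k ih => rw [nsmul, ← M.mv1, ih, h]

theorem nsmul_succ_eq_of_nsmul_eq {x : A} {i j : ℕ} (hij : i < j)
    (h : M.nsmul i x = M.nsmul j x) : M.nsmul (i + 1) x = M.nsmul i x := by
  have hle := M.nsmul_mono x hij
  rw [← h] at hle
  exact hle.antisymm (M.nsmul_mono x i.le_succ)

variable (M) in
theorem exists_oplus_nsmul_eq [Finite A] (x : A) :
    ∃ k, M.oplus (M.nsmul k x) x = M.nsmul k x := by
  obtain ⟨i, j, hne, h⟩ := Finite.exists_ne_map_eq_of_infinite (M.nsmul · x)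
  rcases Nat.lt_or_gt_of_ne hne with hij | hji
  · exact ⟨i, nsmul_succ_eq_of_nsmul_eq hij h⟩
  · exact ⟨j, nsmul_succ_eq_of_nsmul_eq hji h.symm⟩

namespace HasTrivialBooleanCenter

variable [Finite A] (hB : M.HasTrivialBooleanCenter)
include hB

theorem exists_nsmul_eq_one {x : A} (hx : x ≠ M.zero) : ∃ k, M.nsmul k x = M.one := by
  obtain ⟨k, hk⟩ := M.exists_oplus_nsmul_eq x
  refine ⟨k, (hB _ (oplus_nsmul_of_oplus_eq hk k)).resolve_left fun h0 => hx ?_⟩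
  rwa [h0, zero_oplus] at hk

theorem eq_one_of_oplus_eq_self {x y : A} (hx : x ≠ M.zero) (h : M.oplus y x = y) :
    y = M.one := by
  obtain ⟨k, hk⟩ := hB.exists_nsmul_eq_one hx
  rw [← oplus_nsmul_of_oplus_eq h k, hk, oplus_one]

theorem odot_neg_ne_self {x y : A} (hx : x ≠ M.zero) (hy : y ≠ M.zero) :
    M.odot x (M.neg y) ≠ x := fun h => hx <| by
  rw [← M.mv4 x, hB.eq_one_of_oplus_eq_self hy (odot_neg_eq_self_iff.mp h), neg_one]

theorem isAtom_le {c x : A} (hc : M.IsAtom c) (hx : x ≠ M.zero) : M.le c x := by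
  rcases hc.2 _ (M.odot_le_left c (M.neg x)) with h | h
  · exact odot_neg_eq_zero_iff.mp h
  · exact absurd h (hB.odot_neg_ne_self hc.1 hx)

theorem exists_nsmul_eq_of_isAtom {c : A} (hc : M.IsAtom c) (x : A) : ∃ k, M.nsmul k c = x := by
  let := M.toPartialOrder
  induction x using WellFoundedLT.induction with
  | _ x ih =>
    by_cases hx : x = M.zero
    · exact ⟨0, hx.symm⟩
    obtain ⟨k, hk⟩ := ih _ (lt_of_le_of_ne (M.odot_le_left x _) (hB.odot_neg_ne_self hx hc.1))
    exact ⟨k + 1, by rw [nsmul, hk, odot_neg_oplus_cancel_of_le (hB.isAtom_le hc hx)]⟩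

end HasTrivialBooleanCenter

theorem exists_isAtom [Finite A] (h01 : M.zero ≠ M.one) : ∃ c, M.IsAtom c := by
  let := M.toPartialOrder
  obtain ⟨c, hc, hmin⟩ := WellFounded.has_min wellFounded_lt {x : A | x ≠ M.zero}
    ⟨M.one, fun h => h01 h.symm⟩
  refine ⟨c, hc, fun y hy => or_iff_not_imp_left.mpr fun hy0 => ?_⟩
  by_contra hne
  exact hmin y hy0 (lt_of_le_of_ne hy hne)

section LeastMultiple

variable {c : A} {m : ℕ} (hm : IsLeast {k | M.nsmul k c = M.one} m)
include hm

theorem nsmul_eq_one_of_le {k : ℕ} (hk : m ≤ k) : M.nsmul k c = M.one :=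
  eq_one_of_one_le (hm.1 ▸ M.nsmul_mono c hk)

theorem nsmul_min (k : ℕ) : M.nsmul (min k m) c = M.nsmul k c := by
  rcases le_total k m with h | h
  · rw [min_eq_left h]
  · rw [min_eq_right h, hm.1, nsmul_eq_one_of_le hm h]

theorem nsmul_injOn : Set.InjOn (M.nsmul · c) (Set.Iic m) := by
  have key : ∀ i j, i < j → j ≤ m → M.nsmul i c ≠ M.nsmul j c := by
    intro i j hij hjm h
    have hone : M.nsmul i c = M.one := by
      rw [← oplus_nsmul_of_oplus_eq (nsmul_succ_eq_of_nsmul_eq hij h) m, hm.1, oplus_one]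
    have := hm.2 hone
    omega
  intro i hi j hj h
  rcases lt_trichotomy i j with hij | rfl | hji
  · exact absurd h (key i j hij hj)
  · rfl
  · exact absurd h.symm (key j i hji hi)

theorem nsmul_eq_nsmul_iff {i j : ℕ} : M.nsmul i c = M.nsmul j c ↔ min i m = min j m := by
  rw [← nsmul_min hm i, ← nsmul_min hm j]
  exact (nsmul_injOn hm).eq_iff (min_le_right i m) (min_le_right j m)

theorem neg_nsmul (hc : ∀ x, ∃ k, M.nsmul k c = x) (k : ℕ) :
    M.neg (M.nsmul k c) = M.nsmul (m - k) c := by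
  rw [← nsmul_min hm k, show m - k = m - min k m by omega]
  have hkm : min k m ≤ m := min_le_right k m
  obtain ⟨j, hj⟩ := hc (M.neg (M.nsmul (min k m) c))
  refine le.antisymm (M := M) ?_ ?_
  · rw [le, M.mv4, ← nsmul_add, Nat.add_sub_cancel' hkm, hm.1]
  · have hsum : M.nsmul (min k m + j) c = M.one := by
      rw [nsmul_add, hj, M.mv2, neg_oplus_self]
    have := hm.2 hsum
    exact hj ▸ M.nsmul_mono c (by omega)

end LeastMultiple

section Iso

variable {B C : Type v}

variable (M)

structure IsHom (N : MVAlgebra B) (f : A → B) : Prop where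
  map_oplus : ∀ x y, f (M.oplus x y) = N.oplus (f x) (f y)
  map_neg : ∀ x, f (M.neg x) = N.neg (f x)
  map_zero : f M.zero = N.zero

def prod (N : MVAlgebra B) : MVAlgebra (A × B) where
  oplus p q := (M.oplus p.1 q.1, N.oplus p.2 q.2)
  neg p := (M.neg p.1, N.neg p.2)
  zero := (M.zero, N.zero)
  mv1 _ _ _ := Prod.ext (M.mv1 _ _ _) (N.mv1 _ _ _)
  mv2 _ _ := Prod.ext (M.mv2 _ _) (N.mv2 _ _)
  mv3 _ := Prod.ext (M.mv3 _) (N.mv3 _)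
  mv4 _ := Prod.ext (M.mv4 _) (N.mv4 _)
  mv5 _ := Prod.ext (M.mv5 _) (N.mv5 _)
  mv6 _ _ := Prod.ext (M.mv6 _ _) (N.mv6 _ _)

structure IsLukProdIso {ι : Type} (n : ι → ℕ+) (f : A → ∀ i, Luk (n i)) : Prop where
  bijective : Function.Bijective f
  map_oplus : ∀ x y, f (M.oplus x y) = fun i => lukOplus (f x i) (f y i)
  map_neg : ∀ x, f (M.neg x) = fun i => lukNeg (f x i)
  map_zero : f M.zero = fun i => lukZero (n i)

def HasLukProdIso : Prop :=
  ∃ (ι : Type) (_ : Finite ι) (n : ι → ℕ+) (f : A → ∀ i, Luk (n i)), M.IsLukProdIso n f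

variable {M}

theorem IsHom.prodMk {N : MVAlgebra B} {N' : MVAlgebra C} {f : A → B} {g : A → C}
    (hf : M.IsHom N f) (hg : M.IsHom N' g) : M.IsHom (N.prod N') fun x => (f x, g x) where
  map_oplus x y := Prod.ext (hf.map_oplus x y) (hg.map_oplus x y)
  map_neg x := Prod.ext (hf.map_neg x) (hg.map_neg x)
  map_zero := Prod.ext hf.map_zero hg.map_zero

namespace IsLukProdIso

variable {ι κ : Type} {n : ι → ℕ+} {f : A → ∀ i, Luk (n i)}

theorem comp {N : MVAlgebra B} {g : B → ∀ i, Luk (n i)} (hg : N.IsLukProdIso n g) {φ : A → B}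
    (hφ : M.IsHom N φ) (hφ_bij : Function.Bijective φ) : M.IsLukProdIso n (g ∘ φ) where
  bijective := hg.bijective.comp hφ_bij
  map_oplus x y := by simp only [Function.comp, hφ.map_oplus, hg.map_oplus]
  map_neg x := by simp only [Function.comp, hφ.map_neg, hg.map_neg]
  map_zero := by simp only [Function.comp, hφ.map_zero, hg.map_zero]

theorem reindex (hf : M.IsLukProdIso n f) (e : κ ≃ ι) :
    M.IsLukProdIso (n ∘ e) fun x k => f x (e k) where
  bijective := (Equiv.piCongrLeft' (fun i => Luk (n i)) e.symm).bijective.comp hf.bijective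
  map_oplus x y := funext fun k => congrFun (hf.map_oplus x y) (e k)
  map_neg x := funext fun k => congrFun (hf.map_neg x) (e k)
  map_zero := funext fun k => congrFun hf.map_zero (e k)

theorem prod {N : MVAlgebra B} {n' : κ → ℕ+} {g : B → ∀ k, Luk (n' k)}
    (hf : M.IsLukProdIso n f) (hg : N.IsLukProdIso n' g) :
    (M.prod N).IsLukProdIso (Sum.elim n n') fun p =>
      (Equiv.sumPiEquivProdPi fun i => Luk (Sum.elim n n' i)).symm (f p.1, g p.2) where
  bijective := (Equiv.bijective _).comp (hf.bijective.prodMap hg.bijective)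
  map_oplus x y := funext fun
    | .inl i => congrFun (hf.map_oplus x.1 y.1) i
    | .inr k => congrFun (hg.map_oplus x.2 y.2) k
  map_neg x := funext fun
    | .inl i => congrFun (hf.map_neg x.1) i
    | .inr k => congrFun (hg.map_neg x.2) k
  map_zero := funext fun
    | .inl i => congrFun hf.map_zero i
    | .inr k => congrFun hg.map_zero k

end IsLukProdIso

theorem HasLukProdIso.of_isHom {N : MVAlgebra B} (hN : N.HasLukProdIso) {φ : A → B}
    (hφ : M.IsHom N φ) (hφ_bij : Function.Bijective φ) : M.HasLukProdIso :=
  let ⟨ι, hι, n, g, hg⟩ := hN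
  ⟨ι, hι, n, g ∘ φ, hg.comp hφ hφ_bij⟩

theorem HasLukProdIso.prod {N : MVAlgebra B} (hM : M.HasLukProdIso) (hN : N.HasLukProdIso) :
    (M.prod N).HasLukProdIso :=
  let ⟨ι, _, _, _, hf⟩ := hM
  let ⟨κ, _, _, _, hg⟩ := hN
  ⟨ι ⊕ κ, inferInstance, _, _, hf.prod hg⟩

theorem hasLukProdIso_of_zero_eq_one (h01 : M.zero = M.one) : M.HasLukProdIso := by
  have hall : ∀ x y : A, x = y := fun x y =>
    ((h01 ▸ M.le_one x).trans (M.zero_le y)).antisymm ((h01 ▸ M.le_one y).trans (M.zero_le x))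
  refine ⟨Empty, inferInstance, Empty.elim, fun _ i => i.elim, ?_⟩
  exact ⟨⟨fun x y _ => hall x y, fun _ => ⟨M.zero, funext fun i => i.elim⟩⟩,
    fun _ _ => funext fun i => i.elim, fun _ => funext fun i => i.elim, funext fun i => i.elim⟩

end Iso

theorem hasLukProdIso_of_isLeast {c : A} {m : ℕ+} (hm : IsLeast {k | M.nsmul k c = M.one} m)
    (hc : ∀ x, ∃ k, M.nsmul k c = x) : M.HasLukProdIso := by
  obtain ⟨f, hf, hfc⟩ := Function.Surjective.exists_bijective_comp_eq (s := (M.nsmul · c)) hc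
    (lukOfNat_surjective m) fun i j => (nsmul_eq_nsmul_iff hm).trans lukOfNat_eq_iff.symm
  refine ⟨Unit, inferInstance, fun _ => m, fun x _ => f x,
    (Equiv.funUnique Unit _).symm.bijective.comp hf, fun x y => ?_, fun x => ?_, ?_⟩
  · obtain ⟨i, rfl⟩ := hc x
    obtain ⟨j, rfl⟩ := hc y
    simp only [← nsmul_add, hfc, lukOplus_lukOfNat]
  · obtain ⟨k, rfl⟩ := hc x
    simp only [neg_nsmul hm hc, hfc, lukNeg_lukOfNat]
  · exact funext fun _ => (hfc 0).trans lukOfNat_zero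

theorem HasTrivialBooleanCenter.hasLukProdIso [Finite A] (hB : M.HasTrivialBooleanCenter)
    (h01 : M.zero ≠ M.one) : M.HasLukProdIso := by
  classical
  obtain ⟨c, hc⟩ := exists_isAtom h01
  have hex : ∃ k, M.nsmul k c = M.one := hB.exists_nsmul_eq_one hc.1
  have hm : IsLeast {k | M.nsmul k c = M.one} (Nat.find hex) :=
    ⟨Nat.find_spec hex, fun k hk => Nat.find_min' hex hk⟩
  have hm0 : 0 < Nat.find hex := Nat.pos_of_ne_zero fun h => h01 (by simpa [h, nsmul] using hm.1)
  exact hasLukProdIso_of_isLeast (m := ⟨Nat.find hex, hm0⟩) hm (hB.exists_nsmul_eq_of_isAtom hc)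

namespace IsBoolean

variable {b : A} (hb : M.IsBoolean b)
include hb

theorem neg : M.IsBoolean (M.neg b) := by
  have h := M.mv6 (M.neg b) b
  rw [M.mv4, hb, neg_oplus_self] at h
  exact le.antisymm (M := M) h.symm (M.le_oplus_left _ _)

theorem odot_self : M.odot b b = b := by rw [odot, hb.neg, M.mv4]

theorem odot_neg_oplus (w : A) : M.odot b (M.oplus (M.neg b) w) = M.odot b w := by
  refine le.antisymm ?_ (odot_mono (M.le_refl b) (M.le_oplus_right w _))
  have hw : M.le (M.odot b (M.oplus (M.neg b) w)) w := by
    simpa only [odot_neg_self, zero_oplus] using M.odot_oplus_le b (M.neg b) w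
  have hbb : M.odot b (M.oplus (M.neg b) w) = M.odot b (M.odot b (M.oplus (M.neg b) w)) := by
    rw [← odot_assoc, hb.odot_self]
  exact hbb ▸ odot_mono (M.le_refl b) hw

theorem odot_of_le {u : A} (hu : M.le u b) : M.odot b u = u := by
  rw [← hb.odot_neg_oplus, odot_neg_oplus_of_le hu]

theorem oplus_le {u v : A} (hu : M.le u b) (hv : M.le v b) : M.le (M.oplus u v) b :=
  hb ▸ oplus_le_oplus hu hv

theorem odot_oplus (x y : A) : M.odot b (M.oplus x y) = M.oplus (M.odot b x) (M.odot b y) := by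
  refine le.antisymm (M := M) ?_ ?_
  · have hbb : M.odot b (M.oplus x y) = M.odot b (M.odot b (M.oplus x y)) := by
      rw [← odot_assoc, hb.odot_self]
    have hx := M.odot_oplus_le b x y
    rw [M.mv2 (M.odot b x) y] at hx
    rw [hbb, M.mv2 (M.odot b x)]
    exact (odot_mono (M.le_refl b) hx).trans (M.odot_oplus_le b y _)
  · rw [← hb.odot_of_le (hb.oplus_le (M.odot_le_left b x) (M.odot_le_left b y))]
    exact odot_mono (M.le_refl b) (oplus_le_oplus (M.odot_le_right b x) (M.odot_le_right b y))

theorem odot_neg (x : A) : M.odot b (M.neg x) = M.odot b (M.neg (M.odot b x)) := by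
  rw [neg_odot, hb.odot_neg_oplus]

theorem odot_oplus_of_le_neg {u v : A} (hu : M.le u b) (hv : M.le v (M.neg b)) :
    M.odot b (M.oplus u v) = u := by
  rw [hb.odot_oplus, hb.odot_of_le hu, odot_eq_zero_of_le_neg hv, M.mv3]

theorem neg_odot_oplus_odot (x : A) : M.oplus (M.odot (M.neg b) x) (M.odot b x) = x := by
  have h : M.odot x (M.neg (M.odot b x)) = M.odot (M.neg b) x := by
    rw [neg_odot, M.mv2, odot_neg_oplus_comm, hb.neg.odot_neg_oplus]
  rw [← h]
  exact odot_neg_oplus_cancel_of_le (M.odot_le_right b x)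

def interval : MVAlgebra {x // M.le x b} where
  oplus u v := ⟨M.oplus u v, hb.oplus_le u.2 v.2⟩
  neg u := ⟨M.odot b (M.neg u), M.odot_le_left _ _⟩
  zero := ⟨M.zero, M.zero_le b⟩
  mv1 _ _ _ := Subtype.ext (M.mv1 _ _ _)
  mv2 _ _ := Subtype.ext (M.mv2 _ _)
  mv3 _ := Subtype.ext (M.mv3 _)
  mv4 u := Subtype.ext <| by
    change M.odot b (M.neg (M.odot b (M.neg u.1))) = u.1
    rw [neg_odot, M.mv4, odot_neg_oplus_of_le u.2]
  mv5 u := Subtype.ext <| by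
    change M.oplus u.1 (M.odot b M.one) = M.odot b M.one
    rw [odot_one]
    exact (hb.oplus_le u.2 (M.le_refl b)).antisymm (M.le_oplus_right b u.1)
  mv6 u v := Subtype.ext <| by
    -- MV6 in `[0, b]` is the image of MV6 in `A` under the homomorphism `x ↦ b ⊙ x`.
    have transfer : ∀ {x y : A}, M.le y b →
        M.oplus (M.odot b (M.neg (M.oplus (M.odot b (M.neg x)) y))) y =
          M.odot b (M.oplus (M.neg (M.oplus (M.neg x) y)) y) := fun hy => by
      conv_rhs => rw [hb.odot_oplus, hb.odot_neg, hb.odot_oplus, hb.odot_of_le hy]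
    change M.oplus (M.odot b (M.neg (M.oplus (M.odot b (M.neg u.1)) v.1))) v.1 =
      M.oplus (M.odot b (M.neg (M.oplus u.1 (M.odot b (M.neg v.1))))) u.1
    rw [transfer v.2, M.mv2 u.1, transfer u.2, M.mv6, M.mv2 u.1]

theorem isHom_odot : M.IsHom hb.interval fun x => ⟨M.odot b x, M.odot_le_left b x⟩ where
  map_oplus x y := Subtype.ext (hb.odot_oplus x y)
  map_neg x := Subtype.ext (hb.odot_neg x)
  map_zero := Subtype.ext (odot_eq_zero_of_le_neg (M.zero_le _))

theorem bijective_odot_prod :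
    Function.Bijective fun x =>
      ((⟨M.odot b x, M.odot_le_left b x⟩ : {x // M.le x b}),
        (⟨M.odot (M.neg b) x, M.odot_le_left _ x⟩ : {x // M.le x (M.neg b)})) := by
  refine ⟨fun x y hxy => ?_, fun ⟨u, v⟩ => ⟨M.oplus u v, ?_⟩⟩
  · simp only [Prod.mk.injEq, Subtype.mk.injEq] at hxy
    rw [← hb.neg_odot_oplus_odot x, ← hb.neg_odot_oplus_odot y, hxy.1, hxy.2]
  · have hu : M.le u.1 (M.neg (M.neg b)) := (M.mv4 b).symm ▸ u.2
    refine Prod.ext (Subtype.ext (hb.odot_oplus_of_le_neg u.2 v.2)) (Subtype.ext ?_)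
    change M.odot (M.neg b) (M.oplus u.1 v.1) = v.1
    rw [M.mv2, hb.neg.odot_oplus_of_le_neg v.2 hu]

theorem hasLukProdIso (h₁ : hb.interval.HasLukProdIso) (h₂ : hb.neg.interval.HasLukProdIso) :
    M.HasLukProdIso :=
  (h₁.prod h₂).of_isHom (hb.isHom_odot.prodMk hb.neg.isHom_odot) hb.bijective_odot_prod

end IsBoolean

theorem card_subtype_le_lt [Finite A] {b : A} (hb : b ≠ M.one) :
    Nat.card {x // M.le x b} < Nat.card A :=
  Finite.card_subtype_lt fun h => hb (eq_one_of_one_le h)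

theorem hasLukProdIso_of_finite {A : Type u} [Finite A] (M : MVAlgebra A) : M.HasLukProdIso := by
  induction hN : Nat.card A using Nat.strong_induction_on generalizing A with
  | _ N ih =>
  by_cases h01 : M.zero = M.one
  · exact hasLukProdIso_of_zero_eq_one h01
  by_cases hB : M.HasTrivialBooleanCenter
  · exact hB.hasLukProdIso h01
  obtain ⟨b, hb, hb0, hb1⟩ : ∃ b, M.IsBoolean b ∧ b ≠ M.zero ∧ b ≠ M.one := by
    simpa only [HasTrivialBooleanCenter, not_forall, not_or, exists_prop] using hB
  have hnb1 : M.neg b ≠ M.one := fun h => hb0 (M.neg_injective h)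
  exact hb.hasLukProdIso (ih _ (hN ▸ card_subtype_le_lt hb1) hb.interval rfl)
    (ih _ (hN ▸ card_subtype_le_lt hnb1) hb.neg.interval rfl)

end MVAlgebra

/-- Every finite MV-algebra is isomorphic to a finite direct product of the finite
simple MV-algebras Ł_{n_i} (componentwise operations). -/
theorem finite_iso_prod_luk {A : Type u} [Finite A] (M : MVAlgebra A) :
    ∃ (l : ℕ) (n : Fin l → ℕ+) (f : A → ∀ i, Luk (n i)), Function.Bijective f ∧
      (∀ x y, f (M.oplus x y) = fun i => lukOplus (f x i) (f y i)) ∧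
      (∀ x, f (M.neg x) = fun i => lukNeg (f x i)) ∧
      (f M.zero = fun i => lukZero (n i)) := by
  obtain ⟨ι, _, n, f, hf⟩ := M.hasLukProdIso_of_finite
  have hf' := hf.reindex (Finite.equivFin ι).symm
  exact ⟨Nat.card ι, _, _, hf'.bijective, hf'.map_oplus, hf'.map_neg, hf'.map_zero⟩
end

section
/- For every positive natural number m, every subalgebra of Łₘ is the carrier of a copy of Ł_d for a divisor d of m: if S is a subset of Łₘ containing 0 and closed under ⊕ and ¬, then there exists a positive natural number d dividing m such that S = {k/d : k ∈ ℕ, 0 ≤ k ≤ d} (as a subset of {k/m : 0 ≤ k ≤ m} ⊆ ℚ). -/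
namespace Nat

variable {N : Set ℕ} {m e : ℕ}

theorem mul_mem_of_add_mem_of_le (h0 : 0 ∈ N)
    (hadd : ∀ a ∈ N, ∀ b ∈ N, a + b ≤ m → a + b ∈ N) (he : e ∈ N) :
    ∀ j, j * e ≤ m → j * e ∈ N
  | 0, _ => by simpa using h0
  | j + 1, hj => by
    rw [Nat.succ_mul] at hj ⊢
    exact hadd _ (mul_mem_of_add_mem_of_le h0 hadd he j (by omega)) _ he hj

theorem mod_mem_of_sub_mem (hsub : ∀ a ∈ N, ∀ b ∈ N, a - b ∈ N)
    (hadd : ∀ a ∈ N, ∀ b ∈ N, a + b ≤ m → a + b ∈ N) (hle : ∀ a ∈ N, a ≤ m)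
    {a : ℕ} (ha : a ∈ N) (he : e ∈ N) : a % e ∈ N := by
  have h0 : 0 ∈ N := by simpa using hsub a ha a ha
  have hmul : a / e * e ≤ m := (Nat.div_mul_le_self a e).trans (hle a ha)
  rw [Nat.mod_def, Nat.mul_comm]
  exact hsub _ ha _ (mul_mem_of_add_mem_of_le h0 hadd he _ hmul)

theorem exists_eq_setOf_dvd_of_sub_mem (hm : m ∈ N) (hm0 : 0 < m)
    (hsub : ∀ a ∈ N, ∀ b ∈ N, a - b ∈ N) (hadd : ∀ a ∈ N, ∀ b ∈ N, a + b ≤ m → a + b ∈ N)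
    (hle : ∀ a ∈ N, a ≤ m) :
    ∃ e, 0 < e ∧ e ∣ m ∧ N = {a | a ≤ m ∧ e ∣ a} := by
  classical
  have hpos : ∃ e, 0 < e ∧ e ∈ N := ⟨m, hm0, hm⟩
  obtain ⟨he0, he⟩ := Nat.find_spec hpos
  set e := Nat.find hpos
  have hdvd : ∀ a ∈ N, e ∣ a := fun a ha => by
    by_contra hnd
    have hmod_pos : 0 < a % e := Nat.pos_of_ne_zero (mt Nat.dvd_of_mod_eq_zero hnd)
    exact absurd (Nat.find_min' hpos ⟨hmod_pos, mod_mem_of_sub_mem hsub hadd hle ha he⟩)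
      (Nat.not_le.mpr (Nat.mod_lt a he0))
  have h0 : 0 ∈ N := by simpa using hsub m hm m hm
  refine ⟨e, he0, hdvd m hm, Set.ext fun a => ⟨fun ha => ⟨hle a ha, hdvd a ha⟩, ?_⟩⟩
  rintro ⟨ham, j, rfl⟩
  rw [Nat.mul_comm] at ham ⊢
  exact mul_mem_of_add_mem_of_le h0 hadd he j ham

end Nat

namespace Luk

variable {n : ℕ+}

theorem natCast_div_injective {a b : ℕ} (h : (a : ℚ) / (n : ℕ) = (b : ℚ) / (n : ℕ)) : a = b := by
  have hn : ((n : ℕ) : ℚ) ≠ 0 := by exact_mod_cast n.pos.ne'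
  exact_mod_cast (div_left_inj' hn).mp h

theorem coe_lukOplus {x y : Luk n} {a b : ℕ} (hx : (x : ℚ) = a / (n : ℕ))
    (hy : (y : ℚ) = b / (n : ℕ)) : (lukOplus x y : ℚ) = (min (n : ℕ) (a + b) : ℕ) / (n : ℕ) := by
  have hn : (0 : ℚ) < ((n : ℕ) : ℚ) := by exact_mod_cast n.pos
  change min 1 ((x : ℚ) + y) = _
  rw [hx, hy, ← add_div, ← div_self hn.ne', min_div_div_right hn.le]
  push_cast
  rfl

theorem coe_lukNeg {x : Luk n} {a : ℕ} (ha : a ≤ n) (hx : (x : ℚ) = a / (n : ℕ)) :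
    (lukNeg x : ℚ) = ((n - a : ℕ) : ℚ) / (n : ℕ) := by
  have hn : ((n : ℕ) : ℚ) ≠ 0 := by exact_mod_cast n.pos.ne'
  change 1 - (x : ℚ) = _
  rw [hx, Nat.cast_sub ha, sub_div, div_self hn]

def numerators (S : Set (Luk n)) : Set ℕ := {k | ∃ x ∈ S, (x : ℚ) = k / (n : ℕ)}

variable {S : Set (Luk n)}

theorem le_of_mem_numerators {a : ℕ} (ha : a ∈ numerators S) : a ≤ n := by
  obtain ⟨x, -, hxa⟩ := ha
  obtain ⟨b, hb, hxb⟩ := x.2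
  exact natCast_div_injective (hxa.symm.trans hxb) ▸ hb

theorem mem_iff_mem_numerators {x : Luk n} {a : ℕ}
    (hxa : (x : ℚ) = a / (n : ℕ)) : x ∈ S ↔ a ∈ numerators S :=
  ⟨fun hx => ⟨x, hx, hxa⟩, fun ⟨_, hy, hya⟩ => Subtype.ext (hxa.trans hya.symm) ▸ hy⟩

theorem self_mem_numerators (h0 : lukZero n ∈ S) (hneg : ∀ x ∈ S, lukNeg x ∈ S) :
    (n : ℕ) ∈ numerators S :=
  ⟨_, hneg _ h0, by simpa using coe_lukNeg (x := lukZero n) (Nat.zero_le _) (by simp [lukZero])⟩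

theorem add_mem_numerators (hop : ∀ x ∈ S, ∀ y ∈ S, lukOplus x y ∈ S) {a b : ℕ}
    (ha : a ∈ numerators S) (hb : b ∈ numerators S) (hab : a + b ≤ n) :
    a + b ∈ numerators S := by
  obtain ⟨x, hx, hxa⟩ := ha
  obtain ⟨y, hy, hyb⟩ := hb
  exact ⟨_, hop x hx y hy, by rw [coe_lukOplus hxa hyb, min_eq_right hab]⟩

/-- `a - b` (truncated) is the numerator of `¬(¬x ⊕ y)`. -/
theorem sub_mem_numerators (hop : ∀ x ∈ S, ∀ y ∈ S, lukOplus x y ∈ S)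
    (hneg : ∀ x ∈ S, lukNeg x ∈ S) {a b : ℕ} (ha : a ∈ numerators S) (hb : b ∈ numerators S) :
    a - b ∈ numerators S := by
  have han := le_of_mem_numerators ha
  obtain ⟨x, hx, hxa⟩ := ha
  obtain ⟨y, hy, hyb⟩ := hb
  have hval := coe_lukNeg (min_le_left _ _) (coe_lukOplus (coe_lukNeg han hxa) hyb)
  refine ⟨_, hneg _ (hop _ (hneg x hx) y hy), hval.trans ?_⟩
  congr 2
  omega

end Luk

theorem natCast_div_mul_eq_iff {a e d : ℕ} (he : 0 < e) (hd : 0 < d) :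
    (a ≤ e * d ∧ e ∣ a) ↔ ∃ k ≤ d, (a : ℚ) / (e * d : ℕ) = k / d := by
  have heQ : (e : ℚ) ≠ 0 := by exact_mod_cast he.ne'
  have hdQ : (d : ℚ) ≠ 0 := by exact_mod_cast hd.ne'
  constructor
  · rintro ⟨had, k, rfl⟩
    exact ⟨k, Nat.le_of_mul_le_mul_left had he, by push_cast; exact mul_div_mul_left _ _ heQ⟩
  · rintro ⟨k, hkd, hak⟩
    have hak : a = e * k := by
      field_simp at hak
      push_cast at hak
      exact_mod_cast (mul_right_cancel₀ hdQ (hak.trans (by ring)) : (a : ℚ) = e * k)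
    exact ⟨hak ▸ Nat.mul_le_mul_left e hkd, hak ▸ dvd_mul_right e k⟩

/-- Every subalgebra of Łₘ is the copy of Ł_d inside Łₘ for some divisor d of m. -/
theorem subalg_of_luk (m : ℕ+) (S : Set (Luk m)) (h0 : lukZero m ∈ S)
    (hop : ∀ x ∈ S, ∀ y ∈ S, lukOplus x y ∈ S) (hneg : ∀ x ∈ S, lukNeg x ∈ S) :
    ∃ d : ℕ+, (d : ℕ) ∣ (m : ℕ) ∧
      S = {x : Luk m | ∃ k : ℕ, k ≤ (d : ℕ) ∧ (x : ℚ) = (k : ℚ) / (d : ℕ)} := by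
  obtain ⟨e, he, ⟨d, hmed⟩, hN⟩ := Nat.exists_eq_setOf_dvd_of_sub_mem
    (Luk.self_mem_numerators h0 hneg) m.pos (fun _ ha _ hb => Luk.sub_mem_numerators hop hneg ha hb)
    (fun _ ha _ hb => Luk.add_mem_numerators hop ha hb) (fun _ => Luk.le_of_mem_numerators)
  have hd : 0 < d := Nat.pos_of_mul_pos_left (hmed ▸ m.pos)
  refine ⟨⟨d, hd⟩, Dvd.intro_left e hmed.symm, Set.ext fun x => ?_⟩
  obtain ⟨a, -, hxa⟩ := x.2
  rw [Luk.mem_iff_mem_numerators hxa, hN, Set.mem_ofPred_eq, Set.mem_ofPred_eq, hxa, hmed,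
    natCast_div_mul_eq_iff he hd]
  rfl
end

section
/- Let l ≥ 1, let n : Fin l → ℕ be positive, let J be a finite index type, and let m : J → ℕ be positive. If there exists an embedding of MV-algebras from ∏_{i<l} Ł_{n_i} into ∏_{j∈J} Ł_{m_j} (products with componentwise operations), then for every i < l there exists j ∈ J such that n_i divides m_j. -/
def lukOne (n : ℕ+) : Luk n :=
  ⟨1, (n : ℕ), le_rfl, by rw [div_self]; exact_mod_cast n.pos.ne'⟩

def lukInv (n : ℕ+) : Luk n :=
  ⟨1 / (n : ℕ), 1, n.pos, by norm_num⟩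

/-- `lukIter r x = x ⊕ ⋯ ⊕ x` (`r` summands). -/
def lukIter {n : ℕ+} (r : ℕ) (x : Luk n) : Luk n :=
  Nat.rec (lukZero n) (fun _ y => lukOplus x y) r

lemma luk_nonneg {n : ℕ+} (x : Luk n) : 0 ≤ (x : ℚ) := by
  obtain ⟨k, -, hx⟩ := x.2
  rw [hx]
  positivity

lemma lukIter_val {n : ℕ+} (r : ℕ) (x : Luk n) :
    (lukIter r x : ℚ) = min 1 (r * (x : ℚ)) := by
  induction r with
  | zero => simp [lukIter, lukZero]
  | succ r ih =>
    change min 1 ((x : ℚ) + lukIter r x) = _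
    have hx := luk_nonneg x
    rw [ih]
    rcases le_total ((r : ℚ) * x) 1 with hr | hr
    · rw [min_eq_right hr]
      push_cast
      ring_nf
    · rw [min_eq_left hr, min_eq_left (by linarith), min_eq_left (by push_cast; nlinarith)]

lemma luk_val_eq_one_of_oplus_self {n : ℕ+} {x : Luk n} (hidem : lukOplus x x = x)
    (hx : x ≠ lukZero n) : (x : ℚ) = 1 := by
  have hval : min 1 ((x : ℚ) + x) = x := congrArg Subtype.val hidem
  have hne : (x : ℚ) ≠ 0 := fun h0 => hx (Subtype.ext h0)
  have := luk_nonneg x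
  rcases le_total ((x : ℚ) + x) 1 with hc | hc
  · rw [min_eq_right hc] at hval
    exact absurd (by linarith) hne
  · rw [min_eq_left hc] at hval
    exact hval.symm

lemma mul_luk_val_eq_one {M N : ℕ+} {t u : Luk M} (hu : (u : ℚ) = 1)
    (hrel : lukOplus (lukIter ((N : ℕ) - 1) t) (lukNeg u) = lukNeg t) :
    (N : ℚ) * t = 1 := by
  have hval : min 1 (min 1 ((((N : ℕ) - 1 : ℕ) : ℚ) * t) + (1 - u)) = 1 - t := by
    rw [← lukIter_val]
    exact congrArg Subtype.val hrel
  rw [hu, sub_self, add_zero, Nat.cast_pred N.pos] at hval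
  have ht := luk_nonneg t
  rcases le_total (((N : ℚ) - 1) * t) 1 with hc | hc
  · rw [min_eq_right hc, min_eq_right hc] at hval
    linarith
  · rw [min_eq_left hc, min_self] at hval
    have ht0 : (t : ℚ) = 0 := by linarith
    rw [ht0, mul_zero] at hc
    norm_num at hc

lemma dvd_of_mul_luk_val_eq_one {M : ℕ+} {N : ℕ} {t : Luk M} (ht : (N : ℚ) * t = 1) :
    N ∣ (M : ℕ) := by
  obtain ⟨k, -, hk⟩ := t.2
  have hM : ((M : ℕ) : ℚ) ≠ 0 := by exact_mod_cast M.pos.ne'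
  rw [hk, mul_div_assoc', div_eq_one_iff_eq hM] at ht
  exact ⟨k, by exact_mod_cast ht.symm⟩

section Product

variable {ι : Type*} {n : ι → ℕ+}

structure IsLukHom {M : ℕ+} (g : (∀ i, Luk (n i)) → Luk M) : Prop where
  map_oplus : ∀ x y, g (fun i => lukOplus (x i) (y i)) = lukOplus (g x) (g y)
  map_neg : ∀ x, g (fun i => lukNeg (x i)) = lukNeg (g x)
  map_zero : g (fun i => lukZero (n i)) = lukZero M

lemma IsLukHom.map_lukIter {M : ℕ+} {g : (∀ i, Luk (n i)) → Luk M} (hg : IsLukHom g)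
    (r : ℕ) (x : ∀ i, Luk (n i)) : g (fun i => lukIter r (x i)) = lukIter r (g x) := by
  induction r with
  | zero => exact hg.map_zero
  | succ r ih =>
    change g (fun i => lukOplus (x i) (lukIter r (x i))) = lukOplus (g x) (lukIter r (g x))
    rw [hg.map_oplus, ih]

variable [DecidableEq ι]

variable (n) in
def lukSingle (i : ι) (c : Luk (n i)) : ∀ i', Luk (n i') :=
  Function.update (fun i' => lukZero (n i')) i c

lemma lukSingle_one_ne_zero (i : ι) : lukSingle n i (lukOne (n i)) ≠ fun i' => lukZero (n i') := by
  intro h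
  have h1 : ((lukOne (n i) : Luk (n i)) : ℚ) = (lukZero (n i) : ℚ) := by
    rw [← congrFun h i, lukSingle, Function.update_self]
  simp [lukOne, lukZero] at h1

lemma lukSingle_one_oplus_self (i : ι) :
    (fun i' => lukOplus (lukSingle n i (lukOne (n i)) i') (lukSingle n i (lukOne (n i)) i')) =
      lukSingle n i (lukOne (n i)) := by
  funext i'
  apply Subtype.ext
  by_cases hi : i' = i
  · subst hi
    simp [lukSingle, lukOplus, lukOne]
  · simp [lukSingle, Function.update_of_ne hi, lukOplus, lukZero]

lemma lukIter_pred_lukSingle_inv_oplus_neg (i : ι) :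
    (fun i' => lukOplus (lukIter ((n i : ℕ) - 1) (lukSingle n i (lukInv (n i)) i'))
        (lukNeg (lukSingle n i (lukOne (n i)) i'))) =
      fun i' => lukNeg (lukSingle n i (lukInv (n i)) i') := by
  funext i'
  apply Subtype.ext
  change min 1 ((lukIter _ _ : ℚ) + (1 - _)) = 1 - _
  rw [lukIter_val]
  by_cases hi : i' = i
  · subst hi
    have hN : ((n i' : ℕ) : ℚ) ≠ 0 := by exact_mod_cast (n i').pos.ne'
    have hpos : (0 : ℚ) < 1 / (n i' : ℕ) := by positivity
    simp only [lukSingle, Function.update_self, lukInv, lukOne, Nat.cast_pred (n i').pos]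
    rw [sub_one_mul, mul_one_div_cancel hN, sub_self, add_zero,
      min_eq_right (show 1 - 1 / ((n i' : ℕ) : ℚ) ≤ 1 by linarith), min_eq_right (by linarith)]
  · simp [lukSingle, Function.update_of_ne hi, lukZero]

lemma IsLukHom.dvd_of_map_lukSingle_one_ne_zero {M : ℕ+} {g : (∀ i, Luk (n i)) → Luk M}
    (hg : IsLukHom g) {i : ι} (hne : g (lukSingle n i (lukOne (n i))) ≠ lukZero M) :
    (n i : ℕ) ∣ (M : ℕ) := by
  have hidem : lukOplus (g (lukSingle n i (lukOne (n i)))) (g (lukSingle n i (lukOne (n i)))) =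
      g (lukSingle n i (lukOne (n i))) := by
    rw [← hg.map_oplus, lukSingle_one_oplus_self]
  have hrel := congrArg g (lukIter_pred_lukSingle_inv_oplus_neg (n := n) i)
  rw [hg.map_oplus, hg.map_neg, hg.map_neg, hg.map_lukIter] at hrel
  exact dvd_of_mul_luk_val_eq_one
    (mul_luk_val_eq_one (luk_val_eq_one_of_oplus_self hidem hne) hrel)

end Product

theorem embed_prod_dvd_forward_general (l : ℕ) (n : Fin l → ℕ+)
    (J : Type*) (m : J → ℕ+)
    (h : ∃ f : (∀ i, Luk (n i)) → ∀ j, Luk (m j), Function.Injective f ∧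
      (∀ x y, f (fun i => lukOplus (x i) (y i)) = fun j => lukOplus (f x j) (f y j)) ∧
      (∀ x, f (fun i => lukNeg (x i)) = fun j => lukNeg (f x j)) ∧
      (f (fun i => lukZero (n i)) = fun j => lukZero (m j))) :
    ∀ i : Fin l, ∃ j : J, (n i : ℕ) ∣ (m j : ℕ) := by
  obtain ⟨f, hinj, hplus, hneg, h0⟩ := h
  intro i
  obtain ⟨j, hj⟩ : ∃ j, f (lukSingle n i (lukOne (n i))) j ≠ lukZero (m j) := by
    by_contra! hall
    exact lukSingle_one_ne_zero i (hinj (h0 ▸ funext hall))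
  have hg : IsLukHom (fun x => f x j) :=
    ⟨fun x y => congrFun (hplus x y) j, fun x => congrFun (hneg x) j, congrFun h0 j⟩
  exact ⟨j, hg.dvd_of_map_lukSingle_one_ne_zero hj⟩

/-- If ∏ Ł_(n i) embeds into ∏ Ł_(m j) (J finite), then every n i divides some m j. -/
theorem embed_prod_dvd_forward (l : ℕ) (hl : 1 ≤ l) (n : Fin l → ℕ+)
    (J : Type*) [Fintype J] (m : J → ℕ+)
    (h : ∃ f : (∀ i, Luk (n i)) → ∀ j, Luk (m j), Function.Injective f ∧
      (∀ x y, f (fun i => lukOplus (x i) (y i)) = fun j => lukOplus (f x j) (f y j)) ∧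
      (∀ x, f (fun i => lukNeg (x i)) = fun j => lukNeg (f x j)) ∧
      (f (fun i => lukZero (n i)) = fun j => lukZero (m j))) :
    ∀ i : Fin l, ∃ j : J, (n i : ℕ) ∣ (m j : ℕ) :=
  embed_prod_dvd_forward_general l n J m h
end
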